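/- arXiv:2004.03312 — 11 statements merged into one kernel-verified Lean document; each statement's English description precedes it below -/
import Mathlib

section
/- Let Φ₁,…,Φₙ : B(H) → B(K) be positive linear maps with Σᵢ₌₁ⁿ Φᵢ(1_H) = 1_K, let A₁,…,Aₙ, B₁,…,Bₙ ∈ B(H) be self-adjoint operators whose spectra are contained in an interval J, and let f : J → ℝ be a continuously differentiable convex function. Then for every unit vector x ∈ K: ⟨Σᵢ Φᵢ(Aᵢ) x, x⟩ · ⟨f′(Σᵢ Φᵢ(Bᵢ)) x, x⟩ − ⟨f′(Σᵢ Φᵢ(Bᵢ)) (Σᵢ Φᵢ(Bᵢ)) x, x⟩ ≤ ⟨Σᵢ Φᵢ(f(Aᵢ)) x, x⟩ − ⟨f(Σᵢ Φᵢ(Bᵢ)) x, x⟩. -/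
open scoped ComplexInnerProductSpace

section Aux

/-- Tangent line lies below a convex differentiable function. -/
lemma tangent_le_aux {J : Set ℝ} {f f' : ℝ → ℝ} (hconv : ConvexOn ℝ J f)
    (hderiv : ∀ t ∈ J, HasDerivWithinAt f (f' t) J t) {t s : ℝ} (ht : t ∈ J) (hs : s ∈ J) :
    f t + f' t * (s - t) ≤ f s := by
  rcases lt_trichotomy t s with h | rfl | h
  · have h1 := hconv.le_slope_of_hasDerivWithinAt ht hs h (hderiv t ht)
    rw [slope_def_field] at h1
    have h2 : f' t * (s - t) ≤ f s - f t := by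
      have := (le_div_iff₀ (by linarith)).1 h1
      linarith
    linarith
  · simp
  · have h1 := hconv.slope_le_of_hasDerivWithinAt hs ht h (hderiv t ht)
    rw [slope_def_field] at h1
    have h2 : f t - f s ≤ f' t * (t - s) := by
      have := (div_le_iff₀ (by linarith)).1 h1
      linarith
    nlinarith [h2]

end Aux

set_option maxHeartbeats 1000000 in
set_option synthInstance.maxHeartbeats 400000 in
/-- **Theorem 2.1 (first inequality).** For positive linear maps `Φ i` summing to the identity,
self-adjoint operators `A i`, `B i` with spectra in an interval `J`, a continuously
differentiable convex `f : J → ℝ` and a unit vector `x`, the lower Jensen-type bound holds. -/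
theorem stmt_0
    {H K : Type*} [NormedAddCommGroup H] [InnerProductSpace ℂ H] [CompleteSpace H]
    [NormedAddCommGroup K] [InnerProductSpace ℂ K] [CompleteSpace K]
    (n : ℕ) (Φ : Fin n → (H →L[ℂ] H) →ₗ[ℂ] (K →L[ℂ] K))
    (hΦpos : ∀ i, ∀ T : H →L[ℂ] H, 0 ≤ T → 0 ≤ Φ i T)
    (hΦunital : ∑ i, Φ i 1 = 1)
    (A B : Fin n → H →L[ℂ] H)
    (hA : ∀ i, IsSelfAdjoint (A i)) (hB : ∀ i, IsSelfAdjoint (B i))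
    (J : Set ℝ)
    (hAspec : ∀ i, spectrum ℝ (A i) ⊆ J) (hBspec : ∀ i, spectrum ℝ (B i) ⊆ J)
    (f f' : ℝ → ℝ) (hconv : ConvexOn ℝ J f)
    (hderiv : ∀ t ∈ J, HasDerivWithinAt f (f' t) J t) (hf'cont : ContinuousOn f' J)
    (x : K) (hx : ‖x‖ = 1) :
    (⟪(∑ i, Φ i (A i)) x, x⟫).re * (⟪(cfc f' (∑ i, Φ i (B i))) x, x⟫).re
        - (⟪((cfc f' (∑ i, Φ i (B i))) * (∑ i, Φ i (B i))) x, x⟫).re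
      ≤ (⟪(∑ i, Φ i (cfc f (A i))) x, x⟫).re
        - (⟪(cfc f (∑ i, Φ i (B i))) x, x⟫).re := by
  -- nontriviality
  have hKnt : Nontrivial K := by
    by_contra h
    rw [not_nontrivial_iff_subsingleton] at h
    have hx0 : x = 0 := Subsingleton.elim x 0
    rw [hx0, norm_zero] at hx
    exact one_ne_zero hx.symm
  have hone : (1 : K →L[ℂ] K) ≠ 0 := by
    intro h
    obtain ⟨y, hy⟩ := exists_ne (0 : K)
    apply hy
    have := congrArg (fun S : K →L[ℂ] K => S y) h
    simpa using this
  have hn : n ≠ 0 := by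
    rintro rfl
    simp only [Finset.univ_eq_empty, Finset.sum_empty] at hΦunital
    exact hone hΦunital.symm
  have hHnt : Nontrivial H := by
    by_contra h
    rw [not_nontrivial_iff_subsingleton] at h
    have h1 : (1 : H →L[ℂ] H) = 0 := Subsingleton.elim _ _
    rw [h1] at hΦunital
    simp only [map_zero, Finset.sum_const_zero] at hΦunital
    exact hone hΦunital.symm
  haveI : Nontrivial (H →L[ℂ] H) := by
    obtain ⟨v, hv⟩ := exists_ne (0 : H)
    exact ⟨1, 0, fun h => hv (by simpa using congrArg (fun S : H →L[ℂ] H => S v) h)⟩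
  haveI : Nonempty (Fin n) := ⟨⟨0, Nat.pos_of_ne_zero hn⟩⟩
  -- helpers
  have hmono : ∀ i, ∀ {S R : H →L[ℂ] H}, S ≤ R → Φ i S ≤ Φ i R := by
    intro i S R h
    have h2 := hΦpos i (R - S) (sub_nonneg.2 h)
    rw [map_sub] at h2
    exact sub_nonneg.1 h2
  have hsmulΦ : ∀ i (c : ℝ) (S : H →L[ℂ] H), Φ i (c • S) = c • Φ i S := by
    intro i c S
    rw [← algebraMap_smul ℂ c S, map_smul, algebraMap_smul]
  have halg : ∀ c : ℝ, ∑ i, Φ i (algebraMap ℝ (H →L[ℂ] H) c)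
      = algebraMap ℝ (K →L[ℂ] K) c := by
    intro c
    simp_rw [Algebra.algebraMap_eq_smul_one, hsmulΦ, ← Finset.smul_sum, hΦunital]
  -- selfadjointness of images
  have hΦsa : ∀ i (S : H →L[ℂ] H), IsSelfAdjoint S → IsSelfAdjoint (Φ i S) := by
    intro i S hS
    have h1 : S = cfc (fun t : ℝ => max t 0) S - cfc (fun t : ℝ => max (-t) 0) S := by
      rw [← cfc_sub _ _ S (by fun_prop) (by fun_prop)]
      conv_lhs => rw [← cfc_id ℝ S hS]
      exact cfc_congr fun t _ => (max_zero_sub_max_neg_zero_eq_self t).symm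
    have p1 : (0 : H →L[ℂ] H) ≤ cfc (fun t : ℝ => max t 0) S :=
      cfc_nonneg fun t _ => le_max_right _ _
    have p2 : (0 : H →L[ℂ] H) ≤ cfc (fun t : ℝ => max (-t) 0) S :=
      cfc_nonneg fun t _ => le_max_right _ _
    have q1 := ((Φ i _).nonneg_iff_isPositive.1 (hΦpos i _ p1)).1
    have q2 := ((Φ i _).nonneg_iff_isPositive.1 (hΦpos i _ p2)).1
    rw [h1, map_sub]
    exact ContinuousLinearMap.isSelfAdjoint_iff_isSymmetric.2 (q1.sub q2)
  set T : K →L[ℂ] K := ∑ i, Φ i (B i) with hTdef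
  have hTsa : IsSelfAdjoint T := by
    rw [IsSelfAdjoint, star_sum]
    exact Finset.sum_congr rfl fun i _ => hΦsa i _ (hB i)
  -- spectrum bounds
  have hBcpt : ∀ i, IsCompact (spectrum ℝ (B i)) := fun i => spectrum.isCompact _
  have hBne : ∀ i, (spectrum ℝ (B i)).Nonempty := fun i => CFC.spectrum_nonempty (R := ℝ) (B i) (hB i)
  set m : ℝ := Finset.univ.inf' Finset.univ_nonempty (fun i => sInf (spectrum ℝ (B i))) with hm
  set M : ℝ := Finset.univ.sup' Finset.univ_nonempty (fun i => sSup (spectrum ℝ (B i))) with hM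
  have hmJ : m ∈ J := by
    obtain ⟨i0, _, h⟩ := Finset.exists_mem_eq_inf' Finset.univ_nonempty
      (fun i => sInf (spectrum ℝ (B i)))
    rw [hm, h]
    exact hBspec i0 ((hBcpt i0).sInf_mem (hBne i0))
  have hMJ : M ∈ J := by
    obtain ⟨i0, _, h⟩ := Finset.exists_mem_eq_sup' Finset.univ_nonempty
      (fun i => sSup (spectrum ℝ (B i)))
    rw [hM, h]
    exact hBspec i0 ((hBcpt i0).sSup_mem (hBne i0))
  have hIcc : Set.Icc m M ⊆ J := hconv.1.ordConnected.out hmJ hMJ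
  have hTlo : algebraMap ℝ (K →L[ℂ] K) m ≤ T := by
    rw [← halg m, hTdef]
    refine Finset.sum_le_sum fun i _ => hmono i ?_
    rw [algebraMap_le_iff_le_spectrum (hB i)]
    intro s hs
    exact le_trans (Finset.inf'_le _ (Finset.mem_univ i)) (csInf_le (hBcpt i).bddBelow hs)
  have hThi : T ≤ algebraMap ℝ (K →L[ℂ] K) M := by
    rw [← halg M, hTdef]
    refine Finset.sum_le_sum fun i _ => hmono i ?_
    rw [le_algebraMap_iff_spectrum_le (hB i)]
    intro s hs
    exact le_trans (le_csSup (hBcpt i).bddAbove hs)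
      (Finset.le_sup' (fun i => sSup (spectrum ℝ (B i))) (Finset.mem_univ i))
  have hTJ : spectrum ℝ T ⊆ J := by
    intro s hs
    exact hIcc ⟨(algebraMap_le_iff_le_spectrum hTsa).1 hTlo s hs,
      (le_algebraMap_iff_spectrum_le hTsa).1 hThi s hs⟩
  -- inner product helpers
  have hinnerle : ∀ {S R : K →L[ℂ] K}, S ≤ R → (⟪S x, x⟫).re ≤ (⟪R x, x⟫).re := by
    intro S R h
    have h2 := ((R - S).nonneg_iff_isPositive.1 (sub_nonneg.2 h)).inner_nonneg_left x
    simp only [RCLike.re_to_complex, ContinuousLinearMap.sub_apply, inner_sub_left,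
      Complex.sub_re] at h2
    have h3 := (Complex.le_def.1 h2).1
    simp only [Complex.zero_re, Complex.sub_re] at h3
    linarith
  have hxx : (⟪x, x⟫ : ℂ) = 1 := by
    rw [inner_self_eq_norm_sq_to_K, hx]
    norm_num
  have hinner_smul : ∀ (c : ℝ) (S : K →L[ℂ] K), (⟪(c • S) x, x⟫).re = c * (⟪S x, x⟫).re := by
    intro c S
    rw [ContinuousLinearMap.smul_apply, ← algebraMap_smul ℂ c (S x), Complex.coe_algebraMap,
      inner_smul_left]
    simp [Complex.conj_ofReal]
  have hinner_alg : ∀ c : ℝ, (⟪(algebraMap ℝ (K →L[ℂ] K) c) x, x⟫).re = c := by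
    intro c
    rw [Algebra.algebraMap_eq_smul_one, hinner_smul]
    simp only [ContinuousLinearMap.one_apply, hxx]
    simp
  -- the quantities
  set a : ℝ := (⟪(∑ i, Φ i (A i)) x, x⟫).re with ha
  set C : ℝ := (⟪(∑ i, Φ i (cfc f (A i))) x, x⟫).re with hC
  have hfc : ContinuousOn f J := fun t ht => (hderiv t ht).continuousWithinAt
  -- key scalar inequality
  have key : ∀ t ∈ J, f t + f' t * (a - t) ≤ C := by
    intro t ht
    have hop : ∀ i, algebraMap ℝ (H →L[ℂ] H) (f t - f' t * t) + f' t • A i ≤ cfc f (A i) := by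
      intro i
      have h1 : cfc (fun s => (f t - f' t * t) + f' t * s) (A i) ≤ cfc f (A i) := by
        refine cfc_mono (fun s hs => ?_) (by fun_prop) (hfc.mono (hAspec i))
        have := tangent_le_aux hconv hderiv ht (hAspec i hs)
        nlinarith [this]
      rwa [cfc_const_add _ _ _ (by fun_prop) (hA i), cfc_const_mul_id _ _ (hA i)] at h1
    have hsum : algebraMap ℝ (K →L[ℂ] K) (f t - f' t * t) + f' t • (∑ i, Φ i (A i))
        ≤ ∑ i, Φ i (cfc f (A i)) := by
      have e : algebraMap ℝ (K →L[ℂ] K) (f t - f' t * t) + f' t • (∑ i, Φ i (A i))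
          = ∑ i, Φ i (algebraMap ℝ (H →L[ℂ] H) (f t - f' t * t) + f' t • A i) := by
        simp_rw [map_add, hsmulΦ, Finset.sum_add_distrib, halg, Finset.smul_sum]
      rw [e]
      exact Finset.sum_le_sum fun i _ => hmono i (hop i)
    have h2 := hinnerle hsum
    rw [hC]
    have h3 : (⟪(algebraMap ℝ (K →L[ℂ] K) (f t - f' t * t)
        + f' t • (∑ i, Φ i (A i))) x, x⟫).re = (f t - f' t * t) + f' t * a := by
      simp only [ContinuousLinearMap.add_apply, inner_add_left, Complex.add_re]
      rw [hinner_alg, hinner_smul, ha]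
    rw [h3] at h2
    nlinarith [h2]
  -- apply to T
  have hcf : ContinuousOn f (spectrum ℝ T) := hfc.mono hTJ
  have hcf' : ContinuousOn f' (spectrum ℝ T) := hf'cont.mono hTJ
  have hcomb : ContinuousOn (fun t => f t + f' t * (a - t)) (spectrum ℝ T) := by
    exact hcf.add (hcf'.mul (by fun_prop))
  have hfin : cfc (fun t => f t + f' t * (a - t)) T ≤ algebraMap ℝ (K →L[ℂ] K) C :=
    (cfc_le_algebraMap_iff _ _ _ hcomb hTsa).2 fun t ht => key t (hTJ ht)
  have hdecomp : cfc (fun t => f t + f' t * (a - t)) T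
      = cfc f T + (a • cfc f' T - cfc f' T * T) := by
    have e1 : (fun t => f t + f' t * (a - t))
        = fun t => f t + (a * f' t - f' t * t) := by funext t; ring
    have hc1 : ContinuousOn (fun t => a * f' t) (spectrum ℝ T) := continuousOn_const.mul hcf'
    have hc2 : ContinuousOn (fun t => f' t * t) (spectrum ℝ T) :=
      hcf'.mul (by fun_prop)
    rw [e1, cfc_add T f (fun t => a * f' t - f' t * t) hcf (hc1.sub hc2),
      cfc_sub _ _ T hc1 hc2,
      cfc_const_mul a f' T hcf',
      cfc_mul f' _ T hcf' (by fun_prop),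
      cfc_id' ℝ T hTsa]
  rw [hdecomp] at hfin
  have h4 := hinnerle hfin
  rw [hinner_alg] at h4
  have h5 : (⟪(cfc f T + (a • cfc f' T - cfc f' T * T)) x, x⟫).re
      = (⟪(cfc f T) x, x⟫).re + (a * (⟪(cfc f' T) x, x⟫).re
        - (⟪(cfc f' T * T) x, x⟫).re) := by
    simp only [ContinuousLinearMap.add_apply, ContinuousLinearMap.sub_apply,
      inner_add_left, inner_sub_left, Complex.add_re, Complex.sub_re]
    rw [hinner_smul]
  rw [h5] at h4

  linarith
end

section
/- Let Φ₁,…,Φₙ : B(H) → B(K) be positive linear maps with Σᵢ₌₁ⁿ Φᵢ(1_H) = 1_K, let A₁,…,Aₙ, B₁,…,Bₙ ∈ B(H) be self-adjoint operators whose spectra are contained in an interval J, and let f : J → ℝ be a continuously differentiable convex function. Then for every unit vector x ∈ K: ⟨Σᵢ Φᵢ(f(Aᵢ)) x, x⟩ − ⟨f(Σᵢ Φᵢ(Bᵢ)) x, x⟩ ≤ ⟨Σᵢ Φᵢ(f′(Aᵢ)·Aᵢ) x, x⟩ − ⟨Σᵢ Φᵢ(f′(Aᵢ)) x, x⟩ ·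 ⟨Σᵢ Φᵢ(Bᵢ) x, x⟩. -/
open scoped ComplexInnerProductSpace

set_option maxHeartbeats 2000000
set_option synthInstance.maxHeartbeats 800000

private lemma aux_tangent {J : Set ℝ} {f f' : ℝ → ℝ} (hconv : ConvexOn ℝ J f)
    (hderiv : ∀ t ∈ J, HasDerivWithinAt f (f' t) J t) {s t : ℝ} (hs : s ∈ J) (ht : t ∈ J) :
    f t + f' t * (s - t) ≤ f s := by
  rcases lt_trichotomy t s with h | h | h
  · have h1 := hconv.le_slope_of_hasDerivWithinAt ht hs h (hderiv t ht)
    rw [slope_def_field] at h1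
    have h2 := (le_div_iff₀ (by linarith)).mp h1
    linarith
  · simp [h]
  · have h1 := hconv.slope_le_of_hasDerivWithinAt hs ht h (hderiv t ht)
    rw [slope_def_field] at h1
    have h2 := (div_le_iff₀ (by linarith)).mp h1
    nlinarith

private noncomputable def phi {K : Type*} [NormedAddCommGroup K] [InnerProductSpace ℂ K]
    (x : K) (T : K →L[ℂ] K) : ℝ := (⟪T x, x⟫).re

section phi

variable {K : Type*} [NormedAddCommGroup K] [InnerProductSpace ℂ K] [CompleteSpace K] (x : K)

private lemma phi_mono {T S : K →L[ℂ] K} (h : T ≤ S) : phi x T ≤ phi x S := by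
  have h2 := ((ContinuousLinearMap.le_def T S).mp h).2 x
  simp only [ContinuousLinearMap.reApplyInnerSelf, ContinuousLinearMap.sub_apply,
    inner_sub_left, map_sub, RCLike.re_to_complex] at h2
  simp only [phi]
  linarith

private lemma phi_add (T S : K →L[ℂ] K) : phi x (T + S) = phi x T + phi x S := by
  simp [phi, ContinuousLinearMap.add_apply, inner_add_left]

private lemma phi_sub (T S : K →L[ℂ] K) : phi x (T - S) = phi x T - phi x S := by
  simp [phi, ContinuousLinearMap.sub_apply, inner_sub_left]

private lemma phi_smul (r : ℝ) (T : K →L[ℂ] K) : phi x (r • T) = r * phi x T := by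
  simp only [phi, ContinuousLinearMap.smul_apply]
  rw [RCLike.real_smul_eq_coe_smul (K := ℂ), inner_smul_left]
  simp [Complex.conj_ofReal]

private lemma phi_one (hx : ‖x‖ = 1) : phi x 1 = 1 := by
  simp [phi, ContinuousLinearMap.one_apply, inner_self_eq_norm_sq_to_K, hx]

private lemma phi_algebraMap (hx : ‖x‖ = 1) (r : ℝ) :
    phi x (algebraMap ℝ (K →L[ℂ] K) r) = r := by
  rw [Algebra.algebraMap_eq_smul_one, phi_smul, phi_one x hx, mul_one]

private lemma phi_sum {n : ℕ} (T : Fin n → K →L[ℂ] K) :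
    phi x (∑ i, T i) = ∑ i, phi x (T i) := by
  simp [phi, ContinuousLinearMap.sum_apply, sum_inner, Complex.re_sum]

private lemma opsum_nonneg {n : ℕ} (g : Fin n → K →L[ℂ] K) (hg : ∀ i, 0 ≤ g i) :
    0 ≤ ∑ i, g i := by
  refine Finset.sum_induction g (0 ≤ ·) (fun a b ha hb => ?_) le_rfl (fun i _ => hg i)
  have ha' : (0 : K →L[ℂ] K) ≤ a := ha
  have hb' : (0 : K →L[ℂ] K) ≤ b := hb
  show (0 : K →L[ℂ] K) ≤ a + b
  rw [ContinuousLinearMap.nonneg_iff_isPositive] at ha' hb' ⊢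
  exact ha'.add hb'

end phi

/-- **Theorem 2.1 (second inequality).** For positive linear maps `Φ i` summing to the identity,
self-adjoint operators `A i`, `B i` with spectra in an interval `J`, a continuously
differentiable convex `f : J → ℝ` and a unit vector `x`, the upper Jensen-type bound holds. -/
theorem stmt_1
    {H K : Type*} [NormedAddCommGroup H] [InnerProductSpace ℂ H] [CompleteSpace H]
    [NormedAddCommGroup K] [InnerProductSpace ℂ K] [CompleteSpace K]
    (n : ℕ) (Φ : Fin n → (H →L[ℂ] H) →ₗ[ℂ] (K →L[ℂ] K))
    (hΦpos : ∀ i, ∀ T : H →L[ℂ] H, 0 ≤ T → 0 ≤ Φ i T)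
    (hΦunital : ∑ i, Φ i 1 = 1)
    (A B : Fin n → H →L[ℂ] H)
    (hA : ∀ i, IsSelfAdjoint (A i)) (hB : ∀ i, IsSelfAdjoint (B i))
    (J : Set ℝ)
    (hAspec : ∀ i, spectrum ℝ (A i) ⊆ J) (hBspec : ∀ i, spectrum ℝ (B i) ⊆ J)
    (f f' : ℝ → ℝ) (hconv : ConvexOn ℝ J f)
    (hderiv : ∀ t ∈ J, HasDerivWithinAt f (f' t) J t) (hf'cont : ContinuousOn f' J)
    (x : K) (hx : ‖x‖ = 1) :
    (⟪(∑ i, Φ i (cfc f (A i))) x, x⟫).re - (⟪(cfc f (∑ i, Φ i (B i))) x, x⟫).re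
      ≤ (⟪(∑ i, Φ i ((cfc f' (A i)) * (A i))) x, x⟫).re
        - (⟪(∑ i, Φ i (cfc f' (A i))) x, x⟫).re * (⟪(∑ i, Φ i (B i)) x, x⟫).re := by
  classical
  have hx0 : x ≠ 0 := fun h => by simp [h] at hx
  have h01 : (0 : K →L[ℂ] K) ≠ 1 := by
    intro h
    have hx' : (0 : K →L[ℂ] K) x = (1 : K →L[ℂ] K) x := by rw [h]
    simp only [ContinuousLinearMap.zero_apply, ContinuousLinearMap.one_apply] at hx'
    exact hx0 hx'.symm
  have hn : n ≠ 0 := by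
    rintro rfl
    rw [Finset.univ_eq_empty, Finset.sum_empty] at hΦunital
    exact h01 hΦunital
  have hfin : Nonempty (Fin n) := ⟨⟨0, Nat.pos_of_ne_zero hn⟩⟩
  have hHnt : Nontrivial H := by
    by_contra hns
    rw [not_nontrivial_iff_subsingleton] at hns
    have h1 : (1 : H →L[ℂ] H) = 0 := Subsingleton.elim _ _
    rw [h1] at hΦunital
    simp only [map_zero, Finset.sum_const_zero] at hΦunital
    exact h01 hΦunital
  have hHop : Nontrivial (H →L[ℂ] H) := by
    obtain ⟨y, hy⟩ := exists_ne (0 : H)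
    refine ⟨1, 0, fun h => hy ?_⟩
    have := congrArg (fun T : H →L[ℂ] H => T y) h
    simpa using this
  -- Φ is monotone
  have hΦmono : ∀ i, ∀ {T S : H →L[ℂ] H}, T ≤ S → Φ i T ≤ Φ i S := by
    intro i T S hTS
    rw [← sub_nonneg] at hTS ⊢
    rw [← map_sub]
    exact hΦpos i _ hTS
  have hΦalg : ∀ (i : Fin n) (r : ℝ), Φ i (algebraMap ℝ (H →L[ℂ] H) r) = r • Φ i 1 := by
    intro i r
    rw [Algebra.algebraMap_eq_smul_one, LinearMap.map_smul_of_tower]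
  -- continuity of f on J
  have hfc : ContinuousOn f J := fun t ht => (hderiv t ht).continuousWithinAt
  -- spectra of the B i
  have hBcpt : ∀ i, IsCompact (spectrum ℝ (B i)) := fun i =>
    isCompact_iff_compactSpace.mpr inferInstance
  have hBne : ∀ i, (spectrum ℝ (B i)).Nonempty := fun i =>
    CFC.spectrum_nonempty ℝ (B i) (hB i)
  set m : ℝ := Finset.univ.inf' Finset.univ_nonempty (fun i => sInf (spectrum ℝ (B i))) with hm
  set M : ℝ := Finset.univ.sup' Finset.univ_nonempty (fun i => sSup (spectrum ℝ (B i))) with hM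
  have hmJ : m ∈ J := by
    obtain ⟨i, -, hi⟩ := Finset.exists_mem_eq_inf' (Finset.univ_nonempty)
      (fun i => sInf (spectrum ℝ (B i)))
    rw [hm, hi]
    exact hBspec i ((hBcpt i).sInf_mem (hBne i))
  have hMJ : M ∈ J := by
    obtain ⟨i, -, hi⟩ := Finset.exists_mem_eq_sup' (Finset.univ_nonempty)
      (fun i => sSup (spectrum ℝ (B i)))
    rw [hM, hi]
    exact hBspec i ((hBcpt i).sSup_mem (hBne i))
  have hmB : ∀ i, algebraMap ℝ (H →L[ℂ] H) m ≤ B i := by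
    intro i
    refine algebraMap_le_of_le_spectrum (fun t htB => ?_) (hB i)
    rw [hm]
    exact le_trans (Finset.inf'_le _ (Finset.mem_univ i)) (csInf_le (hBcpt i).bddBelow htB)
  have hBM : ∀ i, B i ≤ algebraMap ℝ (H →L[ℂ] H) M := by
    intro i
    refine le_algebraMap_of_spectrum_le (fun t htB => ?_) (hB i)
    rw [hM]
    exact le_trans (le_csSup (hBcpt i).bddAbove htB) (Finset.le_sup' (f := fun i => sSup (spectrum ℝ (B i))) (Finset.mem_univ i))
  set C : K →L[ℂ] K := ∑ i, Φ i (B i) with hC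
  have hmC : algebraMap ℝ (K →L[ℂ] K) m ≤ C := by
    have h0 : (0 : K →L[ℂ] K) ≤ ∑ i, (Φ i (B i) - m • Φ i 1) := by
      refine opsum_nonneg _ fun i => ?_
      rw [sub_nonneg, ← hΦalg]
      exact hΦmono i (hmB i)
    rw [Finset.sum_sub_distrib, sub_nonneg, ← Finset.smul_sum, hΦunital] at h0
    rwa [Algebra.algebraMap_eq_smul_one]
  have hCM : C ≤ algebraMap ℝ (K →L[ℂ] K) M := by
    have h0 : (0 : K →L[ℂ] K) ≤ ∑ i, (M • Φ i 1 - Φ i (B i)) := by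
      refine opsum_nonneg _ fun i => ?_
      rw [sub_nonneg, ← hΦalg]
      exact hΦmono i (hBM i)
    rw [Finset.sum_sub_distrib, sub_nonneg, ← Finset.smul_sum, hΦunital] at h0
    rwa [Algebra.algebraMap_eq_smul_one]
  set s : ℝ := phi x C with hsdef
  have hms : m ≤ s := by
    have := phi_mono x hmC
    rwa [phi_algebraMap x hx] at this
  have hsM : s ≤ M := by
    have := phi_mono x hCM
    rwa [phi_algebraMap x hx] at this
  have hIccJ : Set.Icc m M ⊆ J := hconv.1.ordConnected.out hmJ hMJ
  have hsJ : s ∈ J := hIccJ ⟨hms, hsM⟩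
  have hCsa : IsSelfAdjoint C := by
    have h1 : IsSelfAdjoint (C - algebraMap ℝ (K →L[ℂ] K) m) :=
      ((ContinuousLinearMap.le_def _ _).mp hmC).isSelfAdjoint
    have h2 : IsSelfAdjoint (algebraMap ℝ (K →L[ℂ] K) m) :=
      IsSelfAdjoint.algebraMap _ (IsSelfAdjoint.all m)
    have h3 := h1.add h2
    rwa [sub_add_cancel] at h3
  have hspecCJ : spectrum ℝ C ⊆ J := by
    intro t ht
    exact hIccJ ⟨(algebraMap_le_iff_le_spectrum hCsa).mp hmC t ht,
      (le_algebraMap_iff_spectrum_le hCsa).mp hCM t ht⟩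
  -- lower bound: f s ≤ phi x (cfc f C)
  have hline : cfc (fun t => (f s - f' s * s) + f' s * t) C ≤ cfc f C := by
    refine cfc_mono (fun t ht => ?_) ?_ ?_
    · have h2 := aux_tangent hconv hderiv (hspecCJ ht) hsJ
      nlinarith
    · fun_prop
    · exact hfc.mono hspecCJ
  have hcfc_line : cfc (fun t => (f s - f' s * s) + f' s * t) C
      = algebraMap ℝ (K →L[ℂ] K) (f s - f' s * s) + f' s • C := by
    rw [cfc_const_add _ _ C (by fun_prop) hCsa, cfc_const_mul_id _ C hCsa]
  have hlow : f s ≤ phi x (cfc f C) := by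
    have h1 := phi_mono x hline
    rw [hcfc_line, phi_add, phi_algebraMap x hx, phi_smul, ← hsdef] at h1
    linarith
  -- upper bound for each A i
  have hup : ∀ i, Φ i (cfc f (A i)) ≤
      (f s) • Φ i 1 + (Φ i (cfc f' (A i) * A i) - s • Φ i (cfc f' (A i))) := by
    intro i
    have hAJ := hAspec i
    have hf'A : ContinuousOn f' (spectrum ℝ (A i)) := hf'cont.mono hAJ
    have hc1 : ContinuousOn (fun t => f' t * t) (spectrum ℝ (A i)) :=
      hf'A.mul continuous_id'.continuousOn
    have hc2 : ContinuousOn (fun t => s * f' t) (spectrum ℝ (A i)) :=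
      continuousOn_const.mul hf'A
    have hc3 : ContinuousOn (fun t => f' t * t - s * f' t) (spectrum ℝ (A i)) := hc1.sub hc2
    have key : cfc f (A i) ≤ cfc (fun t => f s + (f' t * t - s * f' t)) (A i) := by
      refine cfc_mono (fun t ht => ?_) ?_ ?_
      · have h2 := aux_tangent hconv hderiv hsJ (hAJ ht)
        nlinarith
      · exact hfc.mono hAJ
      · exact continuousOn_const.add hc3
    have heq : cfc (fun t => f s + (f' t * t - s * f' t)) (A i)
        = algebraMap ℝ (H →L[ℂ] H) (f s) + (cfc f' (A i) * A i - s • cfc f' (A i)) := by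
      rw [cfc_const_add _ _ (A i) hc3 (hA i)]
      congr 1
      rw [cfc_sub _ _ (A i) hc1 hc2]
      congr 1
      · rw [cfc_mul f' (fun t => t) (A i) hf'A continuous_id'.continuousOn,
          cfc_id' ℝ (A i) (hA i)]
      · rw [cfc_const_mul s f' (A i) hf'A]
    rw [heq] at key
    have := hΦmono i key
    rwa [map_add, map_sub, hΦalg, LinearMap.map_smul_of_tower] at this
  -- sum up
  have hsum : ∑ i, Φ i (cfc f (A i)) ≤
      algebraMap ℝ (K →L[ℂ] K) (f s)
        + (∑ i, Φ i (cfc f' (A i) * A i) - s • ∑ i, Φ i (cfc f' (A i))) := by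
    have h0 : (0 : K →L[ℂ] K) ≤ ∑ i,
        ((f s) • Φ i 1 + (Φ i (cfc f' (A i) * A i) - s • Φ i (cfc f' (A i)))
          - Φ i (cfc f (A i))) := by
      refine opsum_nonneg _ fun i => ?_
      rw [sub_nonneg]
      exact hup i
    rw [Finset.sum_sub_distrib, sub_nonneg, Finset.sum_add_distrib,
      Finset.sum_sub_distrib, ← Finset.smul_sum, ← Finset.smul_sum, hΦunital] at h0
    rwa [Algebra.algebraMap_eq_smul_one]
  have hfinal := phi_mono x hsum
  rw [phi_add, phi_sub, phi_smul, phi_algebraMap x hx] at hfinal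
  show phi x (∑ i, Φ i (cfc f (A i))) - phi x (cfc f C)
      ≤ phi x (∑ i, Φ i (cfc f' (A i) * A i)) - phi x (∑ i, Φ i (cfc f' (A i))) * phi x C
  rw [← hsdef]
  nlinarith [hlow, hfinal]
end

section
/- Let Φ₁,…,Φₙ : B(H) → B(K) be positive linear maps with Σᵢ₌₁ⁿ Φᵢ(1_H) = 1_K, let A₁,…,Aₙ, B₁,…,Bₙ ∈ B(H) be self-adjoint operators whose spectra are contained in an interval J, and let f : J → ℝ be a continuously differentiable convex function. Set δ = sup over unit vectors x ∈ K of { ⟨f′(Σᵢ Φᵢ(Bᵢ)) (Σᵢ Φᵢ(Bᵢ)) x, x⟩ − ⟨Σᵢ Φᵢ(Aᵢ) x, x⟩ · ⟨f′(Σᵢ Φᵢ(Bᵢ)) x, x⟩ }. Then f(Σᵢ Φᵢ(Bᵢ)) ≤ Σᵢ Φᵢ(f(Aᵢ)) + δ · 1_K. -/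
open scoped ComplexInnerProductSpace

set_option linter.unusedSectionVars false
set_option synthInstance.maxHeartbeats 1000000
set_option maxHeartbeats 2000000

section Aux

variable {H K : Type*} [NormedAddCommGroup H] [InnerProductSpace ℂ H] [CompleteSpace H]
  [NormedAddCommGroup K] [InnerProductSpace ℂ K] [CompleteSpace K]

private lemma re_inner_smul_left' (r : ℝ) (x y : K) : (⟪r • x, y⟫).re = r * (⟪x, y⟫).re := by
  rw [RCLike.real_smul_eq_coe_smul (K := ℂ), inner_smul_left]
  simp [Complex.mul_re]

private lemma re_inner_smul_right' (r : ℝ) (x y : K) : (⟪x, r • y⟫).re = r * (⟪x, y⟫).re := by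
  rw [RCLike.real_smul_eq_coe_smul (K := ℂ), inner_smul_right]
  simp [Complex.mul_re]

private lemma re_inner_le' {T S : K →L[ℂ] K} (h : T ≤ S) (y : K) :
    (⟪T y, y⟫).re ≤ (⟪S y, y⟫).re := by
  have h2 := ((ContinuousLinearMap.le_def T S).mp h).inner_nonneg_left y
  simp only [ContinuousLinearMap.reApplyInnerSelf, ContinuousLinearMap.sub_apply,
    inner_sub_left, map_sub, RCLike.re_to_complex] at h2
  have h3 := (Complex.le_def.mp h2).1
  simp only [Complex.zero_re, Complex.sub_re] at h3
  linarith

private lemma le_of_re_inner_le' {T S : K →L[ℂ] K} (hT : IsSelfAdjoint T) (hS : IsSelfAdjoint S)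
    (h : ∀ y : K, (⟪T y, y⟫).re ≤ (⟪S y, y⟫).re) : T ≤ S := by
  rw [ContinuousLinearMap.le_def]
  refine ⟨ContinuousLinearMap.isSelfAdjoint_iff_isSymmetric.mp (hS.sub hT), fun y => ?_⟩
  simp only [ContinuousLinearMap.reApplyInnerSelf, ContinuousLinearMap.sub_apply,
    inner_sub_left, map_sub, RCLike.re_to_complex]
  linarith [h y]

private lemma posmap_mono' (Φ : (H →L[ℂ] H) →ₗ[ℂ] (K →L[ℂ] K))
    (hpos : ∀ T : H →L[ℂ] H, 0 ≤ T → 0 ≤ Φ T) {X Y : H →L[ℂ] H} (h : X ≤ Y) : Φ X ≤ Φ Y := by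
  have := hpos (Y - X) (sub_nonneg.mpr h)
  rwa [map_sub, sub_nonneg] at this

private lemma posmap_sa' (Φ : (H →L[ℂ] H) →ₗ[ℂ] (K →L[ℂ] K))
    (hpos : ∀ T : H →L[ℂ] H, 0 ≤ T → 0 ≤ Φ T) {X : H →L[ℂ] H} (hX : IsSelfAdjoint X) :
    IsSelfAdjoint (Φ X) := by
  have h1 : (0 : H →L[ℂ] H) ≤ algebraMap ℝ _ ‖X‖ + X := by
    have := hX.neg_algebraMap_norm_le_self
    rwa [neg_le_iff_add_nonneg, add_comm] at this
  have h2 : (0 : H →L[ℂ] H) ≤ algebraMap ℝ _ ‖X‖ := by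
    have e : algebraMap ℝ (H →L[ℂ] H) ‖X‖
        = star (algebraMap ℝ _ (Real.sqrt ‖X‖)) * algebraMap ℝ _ (Real.sqrt ‖X‖) := by
      rw [IsSelfAdjoint.algebraMap _ (star_trivial _), ← map_mul,
        Real.mul_self_sqrt (norm_nonneg X)]
    rw [e]
    exact star_mul_self_nonneg _
  have e1 : IsSelfAdjoint (Φ (algebraMap ℝ _ ‖X‖ + X)) := .of_nonneg (hpos _ h1)
  have e2 : IsSelfAdjoint (Φ (algebraMap ℝ _ ‖X‖)) := .of_nonneg (hpos _ h2)
  have : Φ X = Φ (algebraMap ℝ _ ‖X‖ + X) - Φ (algebraMap ℝ _ ‖X‖) := by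
    rw [map_add]; abel
  rw [this]
  exact e1.sub e2

private lemma tangent_line' {J : Set ℝ} {f f' : ℝ → ℝ} (hconv : ConvexOn ℝ J f)
    (hderiv : ∀ t ∈ J, HasDerivWithinAt f (f' t) J t) {s t : ℝ} (hs : s ∈ J) (ht : t ∈ J) :
    f s + f' s * (t - s) ≤ f t := by
  rcases lt_trichotomy s t with h | rfl | h
  · have h1 := hconv.le_slope_of_hasDerivWithinAt hs ht h (hderiv s hs)
    rw [slope_def_field] at h1
    have h' : 0 < t - s := sub_pos.mpr h
    have := (le_div_iff₀ h').mp h1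
    linarith
  · simp
  · have h1 := hconv.slope_le_of_hasDerivWithinAt ht hs h (hderiv s hs)
    rw [slope_def_field] at h1
    have h' : 0 < s - t := sub_pos.mpr h
    have := (div_le_iff₀ h').mp h1
    nlinarith

end Aux

/-- **Corollary 2.2.** `f(Σ Φᵢ(Bᵢ)) ≤ Σ Φᵢ(f(Aᵢ)) + δ·1` where `δ` is the supremum over
unit vectors of the corresponding inner-product defect. -/
theorem stmt_2
    {H K : Type*} [NormedAddCommGroup H] [InnerProductSpace ℂ H] [CompleteSpace H]
    [NormedAddCommGroup K] [InnerProductSpace ℂ K] [CompleteSpace K]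
    (n : ℕ) (Φ : Fin n → (H →L[ℂ] H) →ₗ[ℂ] (K →L[ℂ] K))
    (hΦpos : ∀ i, ∀ T : H →L[ℂ] H, 0 ≤ T → 0 ≤ Φ i T)
    (hΦunital : ∑ i, Φ i 1 = 1)
    (A B : Fin n → H →L[ℂ] H)
    (hA : ∀ i, IsSelfAdjoint (A i)) (hB : ∀ i, IsSelfAdjoint (B i))
    (J : Set ℝ)
    (hAspec : ∀ i, spectrum ℝ (A i) ⊆ J) (hBspec : ∀ i, spectrum ℝ (B i) ⊆ J)
    (f f' : ℝ → ℝ) (hconv : ConvexOn ℝ J f)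
    (hderiv : ∀ t ∈ J, HasDerivWithinAt f (f' t) J t) (hf'cont : ContinuousOn f' J)
    (δ : ℝ)
    (hδ : δ = sSup {c : ℝ | ∃ x : K, ‖x‖ = 1 ∧
      c = (⟪((cfc f' (∑ i, Φ i (B i))) * (∑ i, Φ i (B i))) x, x⟫).re
        - (⟪(∑ i, Φ i (A i)) x, x⟫).re * (⟪(cfc f' (∑ i, Φ i (B i))) x, x⟫).re}) :
    cfc f (∑ i, Φ i (B i)) ≤ (∑ i, Φ i (cfc f (A i))) + δ • (1 : K →L[ℂ] K) := by
  classical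
  by_cases hKtriv : Subsingleton (K →L[ℂ] K)
  · exact le_of_eq (Subsingleton.elim _ _)
  have hKnt : Nontrivial (K →L[ℂ] K) := not_subsingleton_iff_nontrivial.mp hKtriv
  set C : K →L[ℂ] K := ∑ i, Φ i (B i) with hCdef
  set D : K →L[ℂ] K := ∑ i, Φ i (A i) with hDdef
  set F : K →L[ℂ] K := ∑ i, Φ i (cfc f (A i)) with hFdef
  -- nondegeneracy
  have hn : n ≠ 0 := by
    rintro rfl
    rw [Finset.univ_eq_empty, Finset.sum_empty] at hΦunital
    exact one_ne_zero (α := K →L[ℂ] K) hΦunital.symm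
  have hHnt : Nontrivial (H →L[ℂ] H) := by
    by_contra h
    have hs : Subsingleton (H →L[ℂ] H) := not_nontrivial_iff_subsingleton.mp h
    have h0 : ∀ i, Φ i 1 = 0 := fun i => by
      rw [Subsingleton.elim (1 : H →L[ℂ] H) 0, map_zero]
    rw [Finset.sum_congr rfl (fun i _ => h0 i), Finset.sum_const, smul_zero] at hΦunital
    exact one_ne_zero (α := K →L[ℂ] K) hΦunital.symm
  have i0 : Fin n := ⟨0, Nat.pos_of_ne_zero hn⟩
  -- self-adjointness
  have hCsa : IsSelfAdjoint C := by
    rw [hCdef, IsSelfAdjoint, star_sum]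
    exact Finset.sum_congr rfl fun i _ => posmap_sa' (Φ i) (hΦpos i) (hB i)
  have hDsa : IsSelfAdjoint D := by
    rw [hDdef, IsSelfAdjoint, star_sum]
    exact Finset.sum_congr rfl fun i _ => posmap_sa' (Φ i) (hΦpos i) (hA i)
  have hFsa : IsSelfAdjoint F := by
    rw [hFdef, IsSelfAdjoint, star_sum]
    exact Finset.sum_congr rfl fun i _ => posmap_sa' (Φ i) (hΦpos i) (cfc_predicate f (A i))
  -- the compact set of spectra
  set S : Set ℝ := (⋃ i, spectrum ℝ (A i)) ∪ (⋃ i, spectrum ℝ (B i)) with hSdef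
  have hScpt : IsCompact S :=
    (isCompact_iUnion fun i => spectrum.isCompact _).union
      (isCompact_iUnion fun i => spectrum.isCompact _)
  have hSne : S.Nonempty := by
    obtain ⟨s, hs⟩ := (hA i0).spectrum_nonempty
    exact ⟨s, Set.mem_union_left _ (Set.mem_iUnion.mpr ⟨i0, hs⟩)⟩
  have hSJ : S ⊆ J := by
    rintro s (hs | hs) <;> rw [Set.mem_iUnion] at hs <;> obtain ⟨i, hi⟩ := hs
    · exact hAspec i hi
    · exact hBspec i hi
  set m0 : ℝ := sInf S with hm0def
  set M0 : ℝ := sSup S with hM0def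
  have hm0S : m0 ∈ S := hScpt.sInf_mem hSne
  have hM0S : M0 ∈ S := hScpt.sSup_mem hSne
  have hm0J : m0 ∈ J := hSJ hm0S
  have hM0J : M0 ∈ J := hSJ hM0S
  have hIccJ : Set.Icc m0 M0 ⊆ J := hconv.1.ordConnected.out hm0J hM0J
  have hlb : ∀ s ∈ S, m0 ≤ s := fun s hs => csInf_le hScpt.bddBelow hs
  have hub : ∀ s ∈ S, s ≤ M0 := fun s hs => le_csSup hScpt.bddAbove hs
  have hAmem : ∀ i, ∀ s ∈ spectrum ℝ (A i), s ∈ S := fun i s hs =>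
    Set.mem_union_left _ (Set.mem_iUnion.mpr ⟨i, hs⟩)
  have hBmem : ∀ i, ∀ s ∈ spectrum ℝ (B i), s ∈ S := fun i s hs =>
    Set.mem_union_right _ (Set.mem_iUnion.mpr ⟨i, hs⟩)
  -- transfer of scalar bounds through the Φ i
  have key_lb : ∀ (X : Fin n → H →L[ℂ] H) (r : ℝ),
      (∀ i, algebraMap ℝ (H →L[ℂ] H) r ≤ X i) →
      r • (1 : K →L[ℂ] K) ≤ ∑ i, Φ i (X i) := by
    intro X r h
    have h1 : ∑ i, Φ i (algebraMap ℝ (H →L[ℂ] H) r) ≤ ∑ i, Φ i (X i) :=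
      Finset.sum_le_sum fun i _ => posmap_mono' (Φ i) (hΦpos i) (h i)
    calc r • (1 : K →L[ℂ] K) = ∑ i, Φ i (algebraMap ℝ (H →L[ℂ] H) r) := by
          simp only [Algebra.algebraMap_eq_smul_one, LinearMap.map_smul_of_tower, ← Finset.smul_sum,
            hΦunital]
      _ ≤ _ := h1
  have key_ub : ∀ (X : Fin n → H →L[ℂ] H) (r : ℝ),
      (∀ i, X i ≤ algebraMap ℝ (H →L[ℂ] H) r) →
      (∑ i, Φ i (X i)) ≤ r • (1 : K →L[ℂ] K) := by
    intro X r h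
    have h1 : ∑ i, Φ i (X i) ≤ ∑ i, Φ i (algebraMap ℝ (H →L[ℂ] H) r) :=
      Finset.sum_le_sum fun i _ => posmap_mono' (Φ i) (hΦpos i) (h i)
    calc ∑ i, Φ i (X i) ≤ ∑ i, Φ i (algebraMap ℝ (H →L[ℂ] H) r) := h1
      _ = r • (1 : K →L[ℂ] K) := by
          simp only [Algebra.algebraMap_eq_smul_one, LinearMap.map_smul_of_tower, ← Finset.smul_sum,
            hΦunital]
  -- bounds on C and D
  have hClb : m0 • (1 : K →L[ℂ] K) ≤ C := key_lb B m0 fun i =>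
    algebraMap_le_of_le_spectrum (fun s hs => hlb s (hBmem i s hs)) (hB i)
  have hCub : C ≤ M0 • (1 : K →L[ℂ] K) := key_ub B M0 fun i =>
    le_algebraMap_of_spectrum_le (fun s hs => hub s (hBmem i s hs)) (hB i)
  have hDlb : m0 • (1 : K →L[ℂ] K) ≤ D := key_lb A m0 fun i =>
    algebraMap_le_of_le_spectrum (fun s hs => hlb s (hAmem i s hs)) (hA i)
  have hDub : D ≤ M0 • (1 : K →L[ℂ] K) := key_ub A M0 fun i =>
    le_algebraMap_of_spectrum_le (fun s hs => hub s (hAmem i s hs)) (hA i)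
  -- spectrum of C
  have hCspecJ : spectrum ℝ C ⊆ J := by
    refine Set.Subset.trans (fun s hs => ?_) hIccJ
    constructor
    · exact (algebraMap_le_iff_le_spectrum (a := C) hCsa).mp
        (by rwa [Algebra.algebraMap_eq_smul_one]) s hs
    · exact (le_algebraMap_iff_spectrum_le (a := C) hCsa).mp
        (by rwa [Algebra.algebraMap_eq_smul_one]) s hs
  have hfJ : ContinuousOn f J := fun t ht => (hderiv t ht).continuousWithinAt
  have hfC : ContinuousOn f (spectrum ℝ C) := hfJ.mono hCspecJ
  have hf'C : ContinuousOn f' (spectrum ℝ C) := hf'cont.mono hCspecJ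
  have hcfc_affine : ∀ i (c d : ℝ),
      cfc (fun t => c + d * t) (A i) = algebraMap ℝ (H →L[ℂ] H) c + d • A i := by
    intro i c d
    rw [cfc_add (a := A i) (fun _ => c) (fun t => d * t) (by fun_prop) (by fun_prop),
      cfc_const c (A i) (hA i), cfc_const_mul_id d (A i) (hA i)]
  have main : ∀ x : K, ‖x‖ = 1 →
      (⟪cfc f C x, x⟫).re ≤ (⟪(F + δ • (1 : K →L[ℂ] K)) x, x⟫).re := by
    intro x hx
    set m : ℝ := (⟪D x, x⟫).re with hmdef
    have hxsq : (⟪x, x⟫).re = 1 := by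
      simp [← RCLike.re_to_complex, inner_self_eq_norm_sq, hx]
    have hm0m : m0 ≤ m := by
      have h := re_inner_le' hDlb x
      rwa [ContinuousLinearMap.smul_apply, ContinuousLinearMap.one_apply,
        re_inner_smul_left', hxsq, mul_one] at h
    have hmM0 : m ≤ M0 := by
      have h := re_inner_le' hDub x
      rwa [ContinuousLinearMap.smul_apply, ContinuousLinearMap.one_apply,
        re_inner_smul_left', hxsq, mul_one] at h
    have hmJ : m ∈ J := hIccJ ⟨hm0m, hmM0⟩
    -- step I : tangent line at m under the A i
    have stepI : (f m - f' m * m) • (1 : K →L[ℂ] K) + f' m • D ≤ F := by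
      have h1 : ∀ i, (f m - f' m * m) • (1 : H →L[ℂ] H) + f' m • A i ≤ cfc f (A i) := by
        intro i
        have h2 : cfc (fun t => (f m - f' m * m) + f' m * t) (A i) ≤ cfc f (A i) := by
          refine cfc_mono (fun t ht => ?_) (by fun_prop) (hfJ.mono (hAspec i))
          have h3 := tangent_line' hconv hderiv hmJ (hAspec i ht)
          nlinarith [h3]
        rwa [hcfc_affine i, Algebra.algebraMap_eq_smul_one] at h2
      have h3 : ∑ i, Φ i ((f m - f' m * m) • (1 : H →L[ℂ] H) + f' m • A i) ≤ F :=
        hFdef ▸ Finset.sum_le_sum fun i _ => posmap_mono' (Φ i) (hΦpos i) (h1 i)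
      calc (f m - f' m * m) • (1 : K →L[ℂ] K) + f' m • D
          = ∑ i, Φ i ((f m - f' m * m) • (1 : H →L[ℂ] H) + f' m • A i) := by
            simp only [map_add, LinearMap.map_smul_of_tower, Finset.sum_add_distrib,
              ← Finset.smul_sum, hΦunital, hDdef]
        _ ≤ F := h3
    have hevF : f m ≤ (⟪F x, x⟫).re := by
      have h4 := re_inner_le' stepI x
      rw [ContinuousLinearMap.add_apply, ContinuousLinearMap.smul_apply,
        ContinuousLinearMap.smul_apply, ContinuousLinearMap.one_apply, inner_add_left,
        Complex.add_re, re_inner_smul_left', re_inner_smul_left', hxsq] at h4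
      rw [← hmdef] at h4
      nlinarith [h4]
    -- step II : tangent line under C
    have hconts : ContinuousOn (fun t => m * f' t - f' t * t) (spectrum ℝ C) :=
      (continuousOn_const.mul hf'C).sub (hf'C.mul continuousOn_id)
    have stepII : cfc (fun t => f t + (m * f' t - f' t * t)) C ≤ algebraMap ℝ _ (f m) := by
      refine cfc_le_algebraMap _ _ _ (fun t ht => ?_) (hfC.add hconts) hCsa
      have h5 := tangent_line' hconv hderiv (hCspecJ ht) hmJ
      nlinarith [h5]
    have hdecomp : cfc (fun t => f t + (m * f' t - f' t * t)) C
        = cfc f C + (m • cfc f' C - cfc f' C * C) := by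
      rw [cfc_add (a := C) f (fun t => m * f' t - f' t * t) hfC hconts,
        cfc_sub (fun t => m * f' t) (fun t => f' t * t) C (continuousOn_const.mul hf'C)
          (hf'C.mul continuousOn_id),
        cfc_const_mul m f' C hf'C,
        cfc_mul f' (fun t => t) C hf'C continuousOn_id,
        cfc_id' ℝ C]
    have hevC : (⟪cfc f C x, x⟫).re
        ≤ f m + ((⟪(cfc f' C * C) x, x⟫).re - m * (⟪cfc f' C x, x⟫).re) := by
      have h5 := re_inner_le' (hdecomp ▸ stepII) x
      rw [Algebra.algebraMap_eq_smul_one] at h5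
      rw [ContinuousLinearMap.add_apply, ContinuousLinearMap.sub_apply,
        ContinuousLinearMap.smul_apply, ContinuousLinearMap.smul_apply,
        ContinuousLinearMap.one_apply, inner_add_left, inner_sub_left, Complex.add_re,
        Complex.sub_re, re_inner_smul_left', re_inner_smul_left', hxsq, mul_one] at h5
      linarith
    -- the defect is at most δ
    have hbddA : BddAbove {c : ℝ | ∃ x : K, ‖x‖ = 1 ∧
        c = (⟪(cfc f' C * C) x, x⟫).re - (⟪D x, x⟫).re * (⟪cfc f' C x, x⟫).re} := by
      refine ⟨‖cfc f' C * C‖ + ‖D‖ * ‖cfc f' C‖, ?_⟩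
      rintro c ⟨y, hy, rfl⟩
      have habs : ∀ T : K →L[ℂ] K, |(⟪T y, y⟫).re| ≤ ‖T‖ := by
        intro T
        refine (Complex.abs_re_le_norm _).trans ?_
        calc ‖(⟪T y, y⟫ : ℂ)‖ = ‖(⟪T y, y⟫ : ℂ)‖ := rfl
          _ ≤ ‖T y‖ * ‖y‖ := norm_inner_le_norm _ _
          _ ≤ (‖T‖ * ‖y‖) * ‖y‖ := by gcongr; exact T.le_opNorm y
          _ = ‖T‖ := by rw [hy]; ring
      have h1 := habs (cfc f' C * C)
      have h2 := habs D
      have h3 := habs (cfc f' C)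
      have e1 : |(⟪D y, y⟫).re| * |(⟪cfc f' C y, y⟫).re| ≤ ‖D‖ * ‖cfc f' C‖ :=
        mul_le_mul h2 h3 (abs_nonneg _) (norm_nonneg _)
      have e2 : -((⟪D y, y⟫).re * (⟪cfc f' C y, y⟫).re)
          ≤ |(⟪D y, y⟫).re| * |(⟪cfc f' C y, y⟫).re| := by
        rw [← abs_mul]
        exact neg_le_abs _
      have e3 := le_abs_self ((⟪(cfc f' C * C) y, y⟫).re)
      have e4 := abs_le.mp h1
      linarith
    have hδge : (⟪(cfc f' C * C) x, x⟫).re - m * (⟪cfc f' C x, x⟫).re ≤ δ := by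
      rw [hδ, hmdef]
      exact le_csSup hbddA ⟨x, hx, rfl⟩
    have hevδ : (⟪(δ • (1 : K →L[ℂ] K)) x, x⟫).re = δ := by
      rw [ContinuousLinearMap.smul_apply, ContinuousLinearMap.one_apply,
        re_inner_smul_left', hxsq, mul_one]
    rw [ContinuousLinearMap.add_apply, inner_add_left, Complex.add_re, hevδ]
    linarith
  -- reduce to unit vectors
  have hδsa : IsSelfAdjoint (δ • (1 : K →L[ℂ] K)) := by
    rw [← Algebra.algebraMap_eq_smul_one]
    exact IsSelfAdjoint.algebraMap _ (star_trivial δ)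
  refine le_of_re_inner_le' (cfc_predicate f C) (hFsa.add hδsa) fun y => ?_
  rcases eq_or_ne y 0 with rfl | hy
  · simp
  · have hyn : ‖y‖ ≠ 0 := norm_ne_zero_iff.mpr hy
    set x : K := ‖y‖⁻¹ • y with hxdef
    have hx1 : ‖x‖ = 1 := by
      rw [hxdef, norm_smul, norm_inv, norm_norm, inv_mul_cancel₀ hyn]
    have hy_eq : y = ‖y‖ • x := by
      rw [hxdef, smul_smul, mul_inv_cancel₀ hyn, one_smul]
    have hscale : ∀ T : K →L[ℂ] K, (⟪T y, y⟫).re = ‖y‖ ^ 2 * (⟪T x, x⟫).re := by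
      intro T
      conv_lhs => rw [hy_eq]
      rw [T.map_smul_of_tower, re_inner_smul_left', re_inner_smul_right']
      ring
    rw [hscale, hscale]
    exact mul_le_mul_of_nonneg_left (main x hx1) (by positivity)
end

section
/- Let Φ₁,…,Φₙ : B(H) → B(K) be positive linear maps with Σᵢ₌₁ⁿ Φᵢ(1_H) = 1_K, let A₁,…,Aₙ, B₁,…,Bₙ ∈ B(H) be self-adjoint operators whose spectra are contained in an interval J, and let f : J → ℝ be a continuously differentiable convex function. Set θ = sup over unit vectors x ∈ K of { ⟨Σᵢ Φᵢ(f′(Aᵢ)·Aᵢ) x, x⟩ − ⟨Σᵢ Φᵢ(f′(Aᵢ)) x, x⟩ · ⟨Σᵢ Φᵢ(Bᵢ) x, x⟩ }. Then Σᵢ Φᵢ(f(Aᵢ)) ≤ f(Σᵢ Φᵢ(Bᵢ)) + θ · 1_K. -/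
open scoped ComplexInnerProductSpace

section Aux

variable {K : Type*} [NormedAddCommGroup K] [InnerProductSpace ℂ K] [CompleteSpace K]

private lemma aux_algebraMap_nonneg (r : ℝ) (hr : 0 ≤ r) :
    (0 : K →L[ℂ] K) ≤ algebraMap ℝ _ r := by
  have hs : ∀ s : ℝ, star (algebraMap ℝ (K →L[ℂ] K) s) = algebraMap ℝ (K →L[ℂ] K) s :=
    fun s => (IsSelfAdjoint.algebraMap _ (star_trivial s)).star_eq
  have h : algebraMap ℝ (K →L[ℂ] K) r
      = star (algebraMap ℝ (K →L[ℂ] K) (Real.sqrt r)) * algebraMap ℝ (K →L[ℂ] K) (Real.sqrt r) := by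
    rw [hs, ← map_mul, Real.mul_self_sqrt hr]
  rw [h]
  exact star_mul_self_nonneg _

private lemma aux_inner_le {U V : K →L[ℂ] K} (h : U ≤ V) (x : K) :
    (⟪U x, x⟫).re ≤ (⟪V x, x⟫).re := by
  have h' := (ContinuousLinearMap.le_def U V).mp h
  have h2 := h'.re_inner_nonneg_left x
  simp only [ContinuousLinearMap.sub_apply, inner_sub_left] at h2
  simp only [RCLike.re_to_complex] at h2 ⊢
  simp only [Complex.sub_re] at h2
  linarith

private lemma aux_abs_le (U : K →L[ℂ] K) (x : K) (hx : ‖x‖ = 1) :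
    |(⟪U x, x⟫).re| ≤ ‖U‖ := by
  have h1 : |(⟪U x, x⟫).re| ≤ ‖⟪U x, x⟫‖ := Complex.abs_re_le_norm _
  have h2 : ‖⟪U x, x⟫‖ ≤ ‖U x‖ * ‖x‖ := by
    simpa using norm_inner_le_norm (𝕜 := ℂ) (U x) x
  have h3 : ‖U x‖ ≤ ‖U‖ * ‖x‖ := U.le_opNorm x
  rw [hx] at h2 h3
  nlinarith

private lemma aux_isPositive {U : K →L[ℂ] K} (hU : IsSelfAdjoint U)
    (h : ∀ x : K, ‖x‖ = 1 → 0 ≤ (⟪U x, x⟫).re) : U.IsPositive := by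
  refine ⟨hU.isSymmetric, fun y => ?_⟩
  show (0:ℝ) ≤ (⟪U y, y⟫).re
  rcases eq_or_ne y 0 with rfl | hy
  · simp
  · have hyn : (0:ℝ) < ‖y‖ := norm_pos_iff.mpr hy
    set x : K := (‖y‖:ℝ)⁻¹ • y with hxdef
    have hx : ‖x‖ = 1 := by rw [hxdef, norm_smul]; simp [hyn.ne']
    have hinner : ⟪U x, x⟫ = ((‖y‖⁻¹ :ℝ):ℂ) * (((‖y‖⁻¹:ℝ):ℂ) * ⟪U y, y⟫) := by
      rw [hxdef, show (‖y‖⁻¹:ℝ) • y = ((‖y‖⁻¹:ℝ):ℂ) • y by norm_cast, map_smul,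
        inner_smul_left, inner_smul_right, Complex.conj_ofReal]
    have h0 := h x hx
    rw [hinner] at h0
    simp only [Complex.re_ofReal_mul] at h0
    rw [← mul_assoc] at h0
    have hpos : (0:ℝ) < ‖y‖⁻¹ * ‖y‖⁻¹ := by positivity
    exact (mul_nonneg_iff_of_pos_left hpos).mp h0

private lemma aux_inner_smul_one (r : ℝ) (x : K) (hx : ‖x‖ = 1) :
    (⟪(r • (1 : K →L[ℂ] K)) x, x⟫).re = r := by
  rw [ContinuousLinearMap.smul_apply, ContinuousLinearMap.one_apply,
    show r • x = ((r:ℝ):ℂ) • x by norm_cast, inner_smul_left, Complex.conj_ofReal,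
    Complex.re_ofReal_mul]
  have h := inner_self_eq_norm_sq (𝕜 := ℂ) x
  rw [RCLike.re_to_complex] at h
  rw [h, hx]
  ring

private lemma aux_inner_algebraMap (r : ℝ) (x : K) (hx : ‖x‖ = 1) :
    (⟪(algebraMap ℝ (K →L[ℂ] K) r) x, x⟫).re = r := by
  rw [Algebra.algebraMap_eq_smul_one]
  exact aux_inner_smul_one r x hx

private lemma aux_inner_real_smul (r : ℝ) (U : K →L[ℂ] K) (x : K) :
    (⟪(r • U) x, x⟫).re = r * (⟪U x, x⟫).re := by
  rw [ContinuousLinearMap.smul_apply, show r • U x = ((r:ℝ):ℂ) • U x by norm_cast,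
    inner_smul_left, Complex.conj_ofReal, Complex.re_ofReal_mul]

end Aux

set_option maxHeartbeats 2000000 in
set_option synthInstance.maxHeartbeats 1000000 in
/-- **Corollary 2.5.** Reversed version: `Σ Φᵢ(f(Aᵢ)) ≤ f(Σ Φᵢ(Bᵢ)) + θ·1`. -/
theorem stmt_5
    {H K : Type*} [NormedAddCommGroup H] [InnerProductSpace ℂ H] [CompleteSpace H]
    [NormedAddCommGroup K] [InnerProductSpace ℂ K] [CompleteSpace K]
    (n : ℕ) (Φ : Fin n → (H →L[ℂ] H) →ₗ[ℂ] (K →L[ℂ] K))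
    (hΦpos : ∀ i, ∀ T : H →L[ℂ] H, 0 ≤ T → 0 ≤ Φ i T)
    (hΦunital : ∑ i, Φ i 1 = 1)
    (A B : Fin n → H →L[ℂ] H)
    (hA : ∀ i, IsSelfAdjoint (A i)) (hB : ∀ i, IsSelfAdjoint (B i))
    (J : Set ℝ)
    (hAspec : ∀ i, spectrum ℝ (A i) ⊆ J) (hBspec : ∀ i, spectrum ℝ (B i) ⊆ J)
    (f f' : ℝ → ℝ) (hconv : ConvexOn ℝ J f)
    (hderiv : ∀ t ∈ J, HasDerivWithinAt f (f' t) J t) (hf'cont : ContinuousOn f' J)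
    (θ : ℝ)
    (hθ : θ = sSup {c : ℝ | ∃ x : K, ‖x‖ = 1 ∧
      c = (⟪(∑ i, Φ i ((cfc f' (A i)) * (A i))) x, x⟫).re
        - (⟪(∑ i, Φ i (cfc f' (A i))) x, x⟫).re * (⟪(∑ i, Φ i (B i)) x, x⟫).re}) :
    (∑ i, Φ i (cfc f (A i))) ≤ cfc f (∑ i, Φ i (B i)) + θ • (1 : K →L[ℂ] K) := by
  classical
  rcases subsingleton_or_nontrivial (K →L[ℂ] K) with hK | hK
  · exact le_of_eq (Subsingleton.elim _ _)
  -- `H →L[ℂ] H` is nontrivial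
  haveI : Nontrivial (H →L[ℂ] H) := by
    rcases subsingleton_or_nontrivial (H →L[ℂ] H) with h' | h'
    · exfalso
      have hz : ∀ i, Φ i 1 = 0 := fun i => by
        rw [Subsingleton.elim (1 : H →L[ℂ] H) 0, map_zero]
      have : (0 : K →L[ℂ] K) = 1 := by
        rw [← hΦunital]
        exact (Finset.sum_eq_zero (fun i _ => hz i)).symm
      exact zero_ne_one this
    · exact h'
  -- `Fin n` is nonempty
  haveI hne : Nonempty (Fin n) := by
    rcases Nat.eq_zero_or_pos n with h0 | h0
    · exfalso
      subst h0
      have : (0 : K →L[ℂ] K) = 1 := by rw [← hΦunital]; simp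
      exact zero_ne_one this
    · exact ⟨⟨0, h0⟩⟩
  have hn : (Finset.univ : Finset (Fin n)).Nonempty := Finset.univ_nonempty
  -- basic continuity
  have hfJ : ContinuousOn f J := fun s hs => (hderiv s hs).continuousWithinAt
  -- Φ preserves order, selfadjointness, real smul
  have hmono : ∀ i, ∀ S T : H →L[ℂ] H, S ≤ T → Φ i S ≤ Φ i T := by
    intro i S T hST
    rw [← sub_nonneg] at hST ⊢
    rw [← map_sub]
    exact hΦpos i _ hST
  have hΦsmul : ∀ i (r : ℝ) (a : H →L[ℂ] H), Φ i (r • a) = r • Φ i a := by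
    intro i r a
    rw [show r • a = ((r:ℝ):ℂ) • a by norm_cast, map_smul]
    norm_cast
  have hΦalg : ∀ i (r : ℝ), Φ i (algebraMap ℝ (H →L[ℂ] H) r) = r • Φ i 1 := by
    intro i r
    rw [Algebra.algebraMap_eq_smul_one, hΦsmul]
  have hsa : ∀ i, ∀ T : H →L[ℂ] H, IsSelfAdjoint T → IsSelfAdjoint (Φ i T) := by
    intro i T hT
    have h1 : (0 : H →L[ℂ] H) ≤ T + algebraMap ℝ _ ‖T‖ := by
      have h2 := hT.neg_algebraMap_norm_le_self
      rw [← sub_nonneg] at h2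
      simpa [sub_neg_eq_add] using h2
    have halg : (0 : H →L[ℂ] H) ≤ algebraMap ℝ _ ‖T‖ :=
      aux_algebraMap_nonneg ‖T‖ (norm_nonneg T)
    have e : Φ i T = Φ i (T + algebraMap ℝ _ ‖T‖) - Φ i (algebraMap ℝ _ ‖T‖) := by
      rw [← map_sub]; congr 1; abel
    rw [e]
    exact (IsSelfAdjoint.of_nonneg (hΦpos i _ h1)).sub
      (IsSelfAdjoint.of_nonneg (hΦpos i _ halg))
  have hsum_sa : ∀ (C : Fin n → H →L[ℂ] H), (∀ i, IsSelfAdjoint (C i)) →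
      IsSelfAdjoint (∑ i, Φ i (C i)) := by
    intro C hC
    rw [IsSelfAdjoint, star_sum]
    exact Finset.sum_congr rfl fun i _ => (hsa i _ (hC i)).star_eq
  -- spectra bounds
  have hcpt : ∀ i, IsCompact (spectrum ℝ (B i)) :=
    fun i => isCompact_iff_compactSpace.mpr inferInstance
  set mi : Fin n → ℝ := fun i => sInf (spectrum ℝ (B i)) with hmi_def
  set Mi : Fin n → ℝ := fun i => sSup (spectrum ℝ (B i)) with hMi_def
  have hmi : ∀ i, mi i ∈ spectrum ℝ (B i) :=
    fun i => (hcpt i).sInf_mem (hB i).spectrum_nonempty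
  have hMi : ∀ i, Mi i ∈ spectrum ℝ (B i) :=
    fun i => (hcpt i).sSup_mem (hB i).spectrum_nonempty
  set m : ℝ := Finset.univ.inf' hn mi with hm_def
  set M : ℝ := Finset.univ.sup' hn Mi with hM_def
  have hmJ : m ∈ J := by
    obtain ⟨i, _, hi⟩ := Finset.exists_mem_eq_inf' hn mi
    rw [hm_def, hi]
    exact hBspec i (hmi i)
  have hMJ : M ∈ J := by
    obtain ⟨i, _, hi⟩ := Finset.exists_mem_eq_sup' hn Mi
    rw [hM_def, hi]
    exact hBspec i (hMi i)
  have hBl : ∀ i, algebraMap ℝ (H →L[ℂ] H) m ≤ B i := by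
    intro i
    refine (algebraMap_le_iff_le_spectrum (hB i)).mpr (fun s hs => ?_)
    exact le_trans (Finset.inf'_le mi (Finset.mem_univ i)) (csInf_le (hcpt i).bddBelow hs)
  have hBu : ∀ i, B i ≤ algebraMap ℝ (H →L[ℂ] H) M := by
    intro i
    refine (le_algebraMap_iff_spectrum_le (hB i)).mpr (fun s hs => ?_)
    exact le_trans (le_csSup (hcpt i).bddAbove hs) (Finset.le_sup' Mi (Finset.mem_univ i))
  -- the operator T and its spectrum
  set T : K →L[ℂ] K := ∑ i, Φ i (B i) with hTdef
  set Pop : K →L[ℂ] K := ∑ i, Φ i (cfc f' (A i) * A i) with hPdef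
  set Qop : K →L[ℂ] K := ∑ i, Φ i (cfc f' (A i)) with hQdef
  have hTsa : IsSelfAdjoint T := hsum_sa B hB
  have halg_sum : ∀ r : ℝ, (∑ i, Φ i (algebraMap ℝ (H →L[ℂ] H) r))
      = algebraMap ℝ (K →L[ℂ] K) r := by
    intro r
    rw [Finset.sum_congr rfl (fun i _ => hΦalg i r), ← Finset.smul_sum, hΦunital,
      Algebra.algebraMap_eq_smul_one]
  have hTl : algebraMap ℝ (K →L[ℂ] K) m ≤ T := by
    rw [← halg_sum m]
    exact Finset.sum_le_sum (fun i _ => hmono i _ _ (hBl i))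
  have hTu : T ≤ algebraMap ℝ (K →L[ℂ] K) M := by
    rw [← halg_sum M]
    exact Finset.sum_le_sum (fun i _ => hmono i _ _ (hBu i))
  have hTspec : spectrum ℝ T ⊆ Set.Icc m M := fun s hs =>
    ⟨(algebraMap_le_iff_le_spectrum hTsa).mp hTl s hs,
     (le_algebraMap_iff_spectrum_le hTsa).mp hTu s hs⟩
  have hIccJ : Set.Icc m M ⊆ J := hconv.1.ordConnected.out hmJ hMJ
  have hTspecJ : spectrum ℝ T ⊆ J := hTspec.trans hIccJ
  -- Step 1 : the operator inequality with parameter t ∈ J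
  have step1 : ∀ t ∈ J, (∑ i, Φ i (cfc f (A i))) ≤
      algebraMap ℝ (K →L[ℂ] K) (f t) + (Pop - t • Qop) := by
    intro t ht
    have hi : ∀ i, Φ i (cfc f (A i)) ≤
        Φ i (algebraMap ℝ (H →L[ℂ] H) (f t) + (cfc f' (A i) * A i - t • cfc f' (A i))) := by
      intro i
      have hf'i : ContinuousOn f' (spectrum ℝ (A i)) := hf'cont.mono (hAspec i)
      have hfi : ContinuousOn f (spectrum ℝ (A i)) := hfJ.mono (hAspec i)
      have hdec : cfc (fun s => f t + (f' s * s - t * f' s)) (A i)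
          = algebraMap ℝ (H →L[ℂ] H) (f t) + (cfc f' (A i) * A i - t • cfc f' (A i)) := by
        rw [cfc_add (A i) (fun _ => f t) (fun s => f' s * s - t * f' s) (by fun_prop)
            (by fun_prop (disch := assumption)), cfc_const (f t) (A i),
          cfc_sub (fun s => f' s * s) (fun s => t * f' s) (A i)
            (by fun_prop (disch := assumption)) (by fun_prop (disch := assumption)),
          cfc_mul f' (fun s => s) (A i) hf'i (by fun_prop), cfc_id' ℝ (A i),
          cfc_const_mul t f' (A i) hf'i]
      refine hmono i _ _ ?_
      rw [← hdec]
      refine cfc_mono (fun s hs => ?_) hfi (by fun_prop (disch := assumption))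
      have h0 := aux_tangent hconv hderiv ht (hAspec i hs)
      have h1 : f' s * (t - s) = t * f' s - f' s * s := by ring
      linarith
    calc (∑ i, Φ i (cfc f (A i)))
        ≤ ∑ i, Φ i (algebraMap ℝ (H →L[ℂ] H) (f t)
            + (cfc f' (A i) * A i - t • cfc f' (A i))) :=
          Finset.sum_le_sum (fun i _ => hi i)
      _ = algebraMap ℝ (K →L[ℂ] K) (f t) + (Pop - t • Qop) := by
          have e : ∀ i, Φ i (algebraMap ℝ (H →L[ℂ] H) (f t)
              + (cfc f' (A i) * A i - t • cfc f' (A i)))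
              = f t • Φ i 1 + (Φ i (cfc f' (A i) * A i) - t • Φ i (cfc f' (A i))) := by
            intro i
            rw [map_add, map_sub, hΦalg, hΦsmul]
          rw [Finset.sum_congr rfl (fun i _ => e i), Finset.sum_add_distrib,
            Finset.sum_sub_distrib, ← Finset.smul_sum, ← Finset.smul_sum, hΦunital,
            Algebra.algebraMap_eq_smul_one, hPdef, hQdef]
  -- boundedness of the defining set of θ
  have hbdd : BddAbove {c : ℝ | ∃ x : K, ‖x‖ = 1 ∧
      c = (⟪Pop x, x⟫).re - (⟪Qop x, x⟫).re * (⟪T x, x⟫).re} := by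
    refine ⟨‖Pop‖ + ‖Qop‖ * ‖T‖, ?_⟩
    rintro c ⟨z, hz, rfl⟩
    have b1 : (⟪Pop z, z⟫).re ≤ ‖Pop‖ := le_trans (le_abs_self _) (aux_abs_le Pop z hz)
    have b2 : |(⟪Qop z, z⟫).re * (⟪T z, z⟫).re| ≤ ‖Qop‖ * ‖T‖ := by
      rw [abs_mul]
      exact mul_le_mul (aux_abs_le Qop z hz) (aux_abs_le T z hz) (abs_nonneg _) (norm_nonneg _)
    have b3 := neg_abs_le ((⟪Qop z, z⟫).re * (⟪T z, z⟫).re)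
    linarith
  -- selfadjointness of the two sides
  have hSsa : IsSelfAdjoint (∑ i, Φ i (cfc f (A i))) :=
    hsum_sa _ (fun i => cfc_predicate f (A i))
  have hRsa : IsSelfAdjoint (cfc f T + θ • (1 : K →L[ℂ] K)) :=
    (cfc_predicate f T).add (IsSelfAdjoint.smul (star_trivial θ) (IsSelfAdjoint.one _))
  -- main pointwise argument
  rw [ContinuousLinearMap.le_def]
  refine aux_isPositive (hRsa.sub hSsa) (fun x hx => ?_)
  set t : ℝ := (⟪T x, x⟫).re with htdef
  have htm : m ≤ t := by
    have h0 := aux_inner_le hTl x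
    rwa [aux_inner_algebraMap m x hx] at h0
  have htM : t ≤ M := by
    have h0 := aux_inner_le hTu x
    rwa [aux_inner_algebraMap M x hx] at h0
  have htJ : t ∈ J := hIccJ ⟨htm, htM⟩
  -- inequality 1 : from step1 at t
  have h1 : (⟪(∑ i, Φ i (cfc f (A i))) x, x⟫).re
      ≤ f t + ((⟪Pop x, x⟫).re - t * (⟪Qop x, x⟫).re) := by
    have h0 := aux_inner_le (step1 t htJ) x
    have e1 : (⟪(algebraMap ℝ (K →L[ℂ] K) (f t) + (Pop - t • Qop)) x, x⟫).re
        = f t + ((⟪Pop x, x⟫).re - t * (⟪Qop x, x⟫).re) := by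
      simp only [ContinuousLinearMap.add_apply, ContinuousLinearMap.sub_apply,
        inner_add_left, inner_sub_left, Complex.add_re, Complex.sub_re]
      rw [aux_inner_algebraMap (f t) x hx]
      have := aux_inner_real_smul t Qop x
      rw [this]
    rwa [e1] at h0
  -- inequality 2 : the θ bound
  have h2 : (⟪Pop x, x⟫).re - (⟪Qop x, x⟫).re * t ≤ θ := by
    rw [hθ]
    exact le_csSup hbdd ⟨x, hx, rfl⟩
  -- inequality 3 : f t ≤ ⟨cfc f T x, x⟩
  have h3 : f t ≤ (⟪(cfc f T) x, x⟫).re := by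
    have hdec : cfc (fun s : ℝ => (f t - f' t * t) + f' t * s) T
        = algebraMap ℝ (K →L[ℂ] K) (f t - f' t * t) + f' t • T := by
      rw [cfc_add T (fun _ => f t - f' t * t) (fun s => f' t * s) (by fun_prop) (by fun_prop),
        cfc_const (f t - f' t * t) T, cfc_const_mul (f' t) (fun s : ℝ => s) T (by fun_prop),
        cfc_id' ℝ T]
    have hop : algebraMap ℝ (K →L[ℂ] K) (f t - f' t * t) + f' t • T ≤ cfc f T := by
      rw [← hdec]
      refine cfc_mono (fun s hs => ?_) (by fun_prop) (hfJ.mono hTspecJ)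
      have h0 := aux_tangent hconv hderiv (hTspecJ hs) htJ
      have h1 : f' t * (s - t) = f' t * s - f' t * t := by ring
      linarith
    have h0 := aux_inner_le hop x
    have e1 : (⟪(algebraMap ℝ (K →L[ℂ] K) (f t - f' t * t) + f' t • T) x, x⟫).re
        = (f t - f' t * t) + f' t * t := by
      simp only [ContinuousLinearMap.add_apply, inner_add_left, Complex.add_re]
      rw [aux_inner_algebraMap (f t - f' t * t) x hx, aux_inner_real_smul (f' t) T x, ← htdef]
    rw [e1] at h0
    linarith
  -- put everything together
  have h4 : (⟪(∑ i, Φ i (cfc f (A i))) x, x⟫).re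
      ≤ (⟪(cfc f T + θ • (1 : K →L[ℂ] K)) x, x⟫).re := by
    have e1 : (⟪(cfc f T + θ • (1 : K →L[ℂ] K)) x, x⟫).re = (⟪(cfc f T) x, x⟫).re + θ := by
      simp only [ContinuousLinearMap.add_apply, inner_add_left, Complex.add_re]
      rw [aux_inner_smul_one θ x hx]
    rw [e1]
    nlinarith [h1, h2, h3]
  simp only [ContinuousLinearMap.sub_apply, inner_sub_left, Complex.sub_re]
  linarith
end

section
/- Let A ∈ B(H) be a self-adjoint operator whose spectrum is contained in an interval J and let f : J → ℝ be a continuously differentiable convex function. Then for every unit vector x ∈ H: ⟨A·f′(A) x, x⟩ − ⟨A x, x⟩ · ⟨f′(A) x, x⟩ ≥ ⟨f(A) x, x⟩ − f(⟨A x, x⟩) ≥ 0. -/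
open scoped ComplexInnerProductSpace

private lemma support_line_le {J : Set ℝ} {f f' : ℝ → ℝ} (hconv : ConvexOn ℝ J f)
    (hderiv : ∀ t ∈ J, HasDerivWithinAt f (f' t) J t)
    {a b : ℝ} (ha : a ∈ J) (hb : b ∈ J) :
    f a + f' a * (b - a) ≤ f b := by
  rcases lt_trichotomy a b with hab | rfl | hba
  · have h := hconv.le_slope_of_hasDerivWithinAt ha hb hab (hderiv a ha)
    rw [slope_def_field, div_eq_inv_mul] at h
    have hba' : 0 < b - a := by linarith
    nlinarith [(le_inv_mul_iff₀ hba').mp h]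
  · simp
  · have h := hconv.slope_le_of_hasDerivWithinAt hb ha hba (hderiv a ha)
    rw [slope_def_field, div_eq_inv_mul] at h
    have hba' : 0 < a - b := by linarith
    nlinarith [(inv_mul_le_iff₀ hba').mp h]

/-- **Remark 2.6 (key estimate).** For self-adjoint `A` with spectrum in `J`, convex
continuously differentiable `f`, and any unit vector `x`:
`⟨A f′(A) x, x⟩ − ⟨A x, x⟩⟨f′(A) x, x⟩ ≥ ⟨f(A) x, x⟩ − f(⟨A x, x⟩) ≥ 0`. -/
theorem stmt_7
    {H : Type*} [NormedAddCommGroup H] [InnerProductSpace ℂ H] [CompleteSpace H]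
    (A : H →L[ℂ] H) (hA : IsSelfAdjoint A)
    (J : Set ℝ) (hAspec : spectrum ℝ A ⊆ J)
    (f f' : ℝ → ℝ) (hconv : ConvexOn ℝ J f)
    (hderiv : ∀ t ∈ J, HasDerivWithinAt f (f' t) J t) (hf'cont : ContinuousOn f' J)
    (x : H) (hx : ‖x‖ = 1) :
    (⟪(cfc f A) x, x⟫).re - f ((⟪A x, x⟫).re)
        ≤ (⟪(A * cfc f' A) x, x⟫).re - (⟪A x, x⟫).re * (⟪(cfc f' A) x, x⟫).re
      ∧ 0 ≤ (⟪(cfc f A) x, x⟫).re - f ((⟪A x, x⟫).re) := by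
  have hx0 : x ≠ 0 := by
    intro h; rw [h, norm_zero] at hx; exact one_ne_zero hx.symm
  haveI : Nontrivial H := nontrivial_of_ne x 0 hx0
  set t₀ : ℝ := (⟪A x, x⟫).re with ht₀
  -- basic inner product computations
  have hmono : ∀ T S : H →L[ℂ] H, T ≤ S → (⟪T x, x⟫).re ≤ (⟪S x, x⟫).re := by
    intro T S hTS
    have h := ((ContinuousLinearMap.le_def T S).mp hTS).inner_nonneg_left x
    simp only [ContinuousLinearMap.sub_apply, inner_sub_left, RCLike.re_to_complex,
      Complex.sub_re] at h
    have h2 := (Complex.le_def.mp h).1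
    rw [Complex.zero_re, Complex.sub_re] at h2
    linarith
  have halg : ∀ r : ℝ, (⟪(algebraMap ℝ (H →L[ℂ] H) r) x, x⟫).re = r := by
    intro r
    rw [Algebra.algebraMap_eq_smul_one]
    rw [show ((r • (1 : H →L[ℂ] H)) x) = r • x from rfl,
      RCLike.real_smul_eq_coe_smul (K := ℂ), inner_smul_left]
    simp [Complex.re_ofReal_mul, inner_self_eq_norm_sq_to_K, hx]
  have hsmul : ∀ (r : ℝ) (T : H →L[ℂ] H), (⟪(r • T) x, x⟫).re = r * (⟪T x, x⟫).re := by
    intro r T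
    rw [show ((r • T) x) = r • (T x) from rfl,
      RCLike.real_smul_eq_coe_smul (K := ℂ), inner_smul_left]
    simp [Complex.re_ofReal_mul]
  -- `t₀ ∈ J`
  have hσc : IsCompact (spectrum ℝ A) := spectrum.isCompact A
  have hσne : (spectrum ℝ A).Nonempty := hA.spectrum_nonempty
  set m := sInf (spectrum ℝ A)
  set M := sSup (spectrum ℝ A)
  have hmmem : m ∈ spectrum ℝ A := hσc.sInf_mem hσne
  have hMmem : M ∈ spectrum ℝ A := hσc.sSup_mem hσne
  have hml : algebraMap ℝ (H →L[ℂ] H) m ≤ A := by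
    have h : (0 : H →L[ℂ] H) ≤ cfc (fun t => t - m) A :=
      cfc_nonneg fun t ht => sub_nonneg.2 (csInf_le hσc.bddBelow ht)
    rw [cfc_sub (fun t : ℝ => t) (fun _ => m) A (by fun_prop) (by fun_prop),
      cfc_id' ℝ A, cfc_const m A] at h
    rwa [sub_nonneg] at h
  have hMl : A ≤ algebraMap ℝ (H →L[ℂ] H) M := by
    have h : (0 : H →L[ℂ] H) ≤ cfc (fun t => M - t) A :=
      cfc_nonneg fun t ht => sub_nonneg.2 (le_csSup hσc.bddAbove ht)
    rw [cfc_sub (fun _ => M) (fun t : ℝ => t) A (by fun_prop) (by fun_prop),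
      cfc_id' ℝ A, cfc_const M A] at h
    rwa [sub_nonneg] at h
  have hm : m ≤ t₀ := by have := hmono _ _ hml; rwa [halg] at this
  have hM : t₀ ≤ M := by have := hmono _ _ hMl; rwa [halg] at this
  have ht₀J : t₀ ∈ J := hconv.1.ordConnected.out (hAspec hmmem) (hAspec hMmem) ⟨hm, hM⟩
  -- continuity on the spectrum
  have hfJ : ContinuousOn f J := fun t ht => (hderiv t ht).continuousWithinAt
  have hfσ : ContinuousOn f (spectrum ℝ A) := hfJ.mono hAspec
  have hf'σ : ContinuousOn f' (spectrum ℝ A) := hf'cont.mono hAspec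
  -- lower bound: supporting line at `t₀`
  have hlow : cfc (fun t => f t₀ + f' t₀ * (t - t₀)) A ≤ cfc f A :=
    cfc_mono (fun t ht => by
        have := support_line_le hconv hderiv ht₀J (hAspec ht); linarith)
      (by fun_prop) hfσ
  have hlow_eq : cfc (fun t => f t₀ + f' t₀ * (t - t₀)) A
      = algebraMap ℝ (H →L[ℂ] H) (f t₀)
        + f' t₀ • (A - algebraMap ℝ (H →L[ℂ] H) t₀) := by
    rw [cfc_add (a := A) (fun _ => f t₀) (fun t => f' t₀ * (t - t₀)) (by fun_prop) (by fun_prop),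
      cfc_const (f t₀) A, cfc_const_mul (f' t₀) (fun t => t - t₀) A (by fun_prop),
      cfc_sub (fun t : ℝ => t) (fun _ => t₀) A (by fun_prop) (by fun_prop),
      cfc_id' ℝ A, cfc_const t₀ A]
  -- upper bound: gradient inequality at each spectral point
  have hupp : cfc f A ≤ cfc (fun t => f t₀ + t * f' t - t₀ * f' t) A :=
    cfc_mono (fun t ht => by
        have := support_line_le hconv hderiv (hAspec ht) ht₀J; nlinarith [this])
      hfσ (by fun_prop)
  have hupp_eq : cfc (fun t => f t₀ + t * f' t - t₀ * f' t) A
      = algebraMap ℝ (H →L[ℂ] H) (f t₀) + A * cfc f' A - t₀ • cfc f' A := by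
    rw [cfc_sub (fun t => f t₀ + t * f' t) (fun t => t₀ * f' t) A (by fun_prop) (by fun_prop),
      cfc_add (a := A) (fun _ => f t₀) (fun t => t * f' t) (by fun_prop) (by fun_prop),
      cfc_const (f t₀) A, cfc_const_mul t₀ f' A hf'σ,
      cfc_mul (fun t : ℝ => t) f' A (by fun_prop) hf'σ, cfc_id' ℝ A]
  -- translate to inner products
  have hlow' : f t₀ ≤ (⟪(cfc f A) x, x⟫).re := by
    have h := hmono _ _ hlow
    rw [hlow_eq] at h
    simp only [ContinuousLinearMap.add_apply, inner_add_left, Complex.add_re, halg] at h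
    rw [hsmul] at h
    simp only [ContinuousLinearMap.sub_apply, inner_sub_left, Complex.sub_re, halg] at h
    rw [← ht₀] at h
    simpa using h
  have hupp' : (⟪(cfc f A) x, x⟫).re
      ≤ f t₀ + (⟪(A * cfc f' A) x, x⟫).re - t₀ * (⟪(cfc f' A) x, x⟫).re := by
    have h := hmono _ _ hupp
    rw [hupp_eq] at h
    simp only [ContinuousLinearMap.sub_apply, inner_sub_left, Complex.sub_re,
      ContinuousLinearMap.add_apply, inner_add_left, Complex.add_re, halg, hsmul] at h
    linarith
  exact ⟨by linarith, by linarith⟩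
end

section
/- Let A, B ∈ B(H) be self-adjoint operators whose spectra are contained in an interval J, and let f : J → ℝ be a continuously differentiable convex function with f′ ≥ 0 on J (i.e., f is increasing). If A ≤ B, then for every unit vector x ∈ H: ⟨f′(B)·B x, x⟩ − ⟨A x, x⟩ · ⟨f′(B) x, x⟩ ≥ 0. -/
open scoped ComplexInnerProductSpace

/-- Supporting line inequality for convex differentiable functions. -/
lemma support_line_aux {J : Set ℝ} {f f' : ℝ → ℝ} (hconv : ConvexOn ℝ J f)
    (hderiv : ∀ t ∈ J, HasDerivWithinAt f (f' t) J t) {s t : ℝ}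
    (hs : s ∈ J) (ht : t ∈ J) : f' t * (s - t) ≤ f s - f t := by
  rcases lt_trichotomy s t with h | h | h
  · have h1 : slope f s t ≤ f' t := hconv.slope_le_of_hasDerivWithinAt hs ht h (hderiv t ht)
    rw [slope_def_field] at h1
    have h2 : (f t - f s) / (t - s) ≤ f' t := h1
    rw [div_le_iff₀ (by linarith)] at h2
    nlinarith
  · subst h; simp
  · have h1 : f' t ≤ slope f t s := hconv.le_slope_of_hasDerivWithinAt ht hs h (hderiv t ht)
    rw [slope_def_field] at h1
    have h2 : f' t ≤ (f s - f t) / (s - t) := h1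
    rw [le_div_iff₀ (by linarith)] at h2
    nlinarith

/-- Quadratic form of a cfc of a nonnegative function is nonnegative. -/
lemma quad_nonneg_aux {H : Type*} [NormedAddCommGroup H] [InnerProductSpace ℂ H]
    [CompleteSpace H] (T : H →L[ℂ] H) (g : ℝ → ℝ)
    (hg0 : ∀ t ∈ spectrum ℝ T, 0 ≤ g t) (x : H) :
    0 ≤ (⟪(cfc g T) x, x⟫).re := by
  have h : (0 : H →L[ℂ] H) ≤ cfc g T := cfc_nonneg hg0
  exact (Complex.nonneg_iff.mp (((ContinuousLinearMap.nonneg_iff_isPositive _).mp h).inner_nonneg_left x)).1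

/-- If `A ≤ B` and `f` is convex continuously differentiable with `f′ ≥ 0` on `J`, then
`⟨f′(B)B x, x⟩ − ⟨A x, x⟩⟨f′(B) x, x⟩ ≥ 0` for every unit vector `x`. -/
theorem stmt_8
    {H : Type*} [NormedAddCommGroup H] [InnerProductSpace ℂ H] [CompleteSpace H]
    (A B : H →L[ℂ] H) (hA : IsSelfAdjoint A) (hB : IsSelfAdjoint B)
    (J : Set ℝ) (hAspec : spectrum ℝ A ⊆ J) (hBspec : spectrum ℝ B ⊆ J)
    (f f' : ℝ → ℝ) (hconv : ConvexOn ℝ J f)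
    (hderiv : ∀ t ∈ J, HasDerivWithinAt f (f' t) J t) (hf'cont : ContinuousOn f' J)
    (hf'nonneg : ∀ t ∈ J, 0 ≤ f' t)
    (hAB : A ≤ B)
    (x : H) (hx : ‖x‖ = 1) :
    0 ≤ (⟪((cfc f' B) * B) x, x⟫).re - (⟪A x, x⟫).re * (⟪(cfc f' B) x, x⟫).re := by
  have hx0 : x ≠ 0 := by intro h; rw [h] at hx; simp at hx
  have : Nontrivial H := ⟨x, 0, hx0⟩
  have hxx1 : (⟪x, x⟫ : ℂ) = 1 := by
    rw [inner_self_eq_norm_sq_to_K, hx]; norm_num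
  -- helpers for real parts of quadratic forms
  have h_sub : ∀ S T : H →L[ℂ] H, (⟪(S - T) x, x⟫).re = (⟪S x, x⟫).re - (⟪T x, x⟫).re := by
    intro S T; simp [ContinuousLinearMap.sub_apply, inner_sub_left]
  have h_add : ∀ S T : H →L[ℂ] H, (⟪(S + T) x, x⟫).re = (⟪S x, x⟫).re + (⟪T x, x⟫).re := by
    intro S T; simp [ContinuousLinearMap.add_apply, inner_add_left]
  have h_smul : ∀ (r : ℝ) (T : H →L[ℂ] H), (⟪(r • T) x, x⟫).re = r * (⟪T x, x⟫).re := by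
    intro r T
    have : (r • T) x = (r : ℂ) • (T x) := by
      rw [ContinuousLinearMap.smul_apply, Complex.coe_smul]
    rw [this, inner_smul_left]
    simp [Complex.mul_re]
  have h_alg : ∀ r : ℝ, (⟪(algebraMap ℝ (H →L[ℂ] H) r) x, x⟫).re = r := by
    intro r
    rw [Algebra.algebraMap_eq_smul_one, h_smul]
    simp [ContinuousLinearMap.one_apply, hxx1, hx]
  set a : ℝ := (⟪A x, x⟫).re with ha
  set b : ℝ := (⟪B x, x⟫).re with hb
  -- membership of quadratic means in J
  have mem_J : ∀ (T : H →L[ℂ] H), IsSelfAdjoint T → spectrum ℝ T ⊆ J →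
      (⟪T x, x⟫).re ∈ J := by
    intro T hT hTs
    have hne : (spectrum ℝ T).Nonempty := hT.spectrum_nonempty
    have hcpt : IsCompact (spectrum ℝ T) := spectrum.isCompact T
    have hm : sInf (spectrum ℝ T) ∈ spectrum ℝ T := hcpt.sInf_mem hne
    have hM : sSup (spectrum ℝ T) ∈ spectrum ℝ T := hcpt.sSup_mem hne
    have hlow : sInf (spectrum ℝ T) ≤ (⟪T x, x⟫).re := by
      have h1 : 0 ≤ (⟪(cfc (fun t => t - sInf (spectrum ℝ T)) T) x, x⟫).re :=
        quad_nonneg_aux T _ (fun t ht => sub_nonneg.2 (csInf_le hcpt.bddBelow ht)) x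
      rw [cfc_sub (fun t : ℝ => t) (fun _ => sInf (spectrum ℝ T)) T (by fun_prop) (by fun_prop),
        cfc_id' ℝ T, cfc_const _ _, h_sub, h_alg] at h1
      linarith
    have hhigh : (⟪T x, x⟫).re ≤ sSup (spectrum ℝ T) := by
      have h1 : 0 ≤ (⟪(cfc (fun t => sSup (spectrum ℝ T) - t) T) x, x⟫).re :=
        quad_nonneg_aux T _ (fun t ht => sub_nonneg.2 (le_csSup hcpt.bddAbove ht)) x
      rw [cfc_sub (fun _ => sSup (spectrum ℝ T)) (fun t : ℝ => t) T (by fun_prop) (by fun_prop),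
        cfc_id' ℝ T, cfc_const _ _, h_sub, h_alg] at h1
      linarith
    exact hconv.1.ordConnected.out (hTs hm) (hTs hM) ⟨hlow, hhigh⟩
  have haJ : a ∈ J := mem_J A hA hAspec
  have hbJ : b ∈ J := mem_J B hB hBspec
  have hab : a ≤ b := by
    have h := ((ContinuousLinearMap.le_def A B).mp hAB).inner_nonneg_left x
    have h2 : (0:ℝ) ≤ (⟪(B - A) x, x⟫).re := (Complex.nonneg_iff.mp h).1
    rw [h_sub] at h2
    linarith
  -- continuity facts
  have hfJ : ContinuousOn f J := fun t ht => (hderiv t ht).continuousWithinAt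
  have hf'B : ContinuousOn f' (spectrum ℝ B) := hf'cont.mono hBspec
  have hfB : ContinuousOn f (spectrum ℝ B) := hfJ.mono hBspec
  -- the key function
  set g : ℝ → ℝ := fun t => f' t * (t - a) with hg
  have hgB : ContinuousOn g (spectrum ℝ B) := hf'B.mul (by fun_prop)
  -- operator identity : cfc g B = cfc f' B * B - a • cfc f' B
  have key : cfc g B = cfc f' B * B - a • cfc f' B := by
    have e1 : cfc g B = cfc (fun t => f' t * t - a * f' t) B :=
      cfc_congr (fun t _ => by simp [hg]; ring)
    rw [e1, cfc_sub (fun t => f' t * t) (fun t => a * f' t) B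
        (hf'B.mul (by fun_prop)) (continuousOn_const.mul hf'B),
      cfc_mul f' (fun t : ℝ => t) B hf'B (by fun_prop), cfc_id' ℝ B,
      cfc_const_mul a f' B hf'B]
  -- rewrite goal in terms of cfc g B
  have goal_eq : (⟪(cfc g B) x, x⟫).re
      = (⟪((cfc f' B) * B) x, x⟫).re - a * (⟪(cfc f' B) x, x⟫).re := by
    rw [key, h_sub, h_smul]
  suffices hgoal : 0 ≤ (⟪(cfc g B) x, x⟫).re by linarith [goal_eq ▸ hgoal]
  -- decompose g = h₁ + k₁ + l₁
  set h₁ : ℝ → ℝ := fun t => f' t * (t - a) - (f t - f a) with hh₁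
  set k₁ : ℝ → ℝ := fun t => f t - f b - f' b * (t - b) with hk₁
  set l₁ : ℝ → ℝ := fun t => f' b * t + (f b - f a - f' b * b) with hl₁
  have hh₁B : ContinuousOn h₁ (spectrum ℝ B) := by
    apply ContinuousOn.sub
    · exact hf'B.mul (by fun_prop)
    · exact hfB.sub continuousOn_const
  have hk₁B : ContinuousOn k₁ (spectrum ℝ B) := by
    apply ContinuousOn.sub
    · exact hfB.sub continuousOn_const
    · fun_prop
  have hl₁B : ContinuousOn l₁ (spectrum ℝ B) := by fun_prop
  have hdecomp : cfc g B = cfc h₁ B + cfc k₁ B + cfc l₁ B := by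
    have e : g = fun t => (h₁ t + k₁ t) + l₁ t := by
      funext t; simp [hg, hh₁, hk₁, hl₁]; ring
    rw [e, cfc_add B (fun t => h₁ t + k₁ t) l₁ ((hh₁B.add hk₁B)) hl₁B, cfc_add B _ _ hh₁B hk₁B]
  rw [hdecomp, h_add, h_add]
  -- h₁ part
  have p1 : 0 ≤ (⟪(cfc h₁ B) x, x⟫).re := by
    apply quad_nonneg_aux
    intro t ht
    have htJ : t ∈ J := hBspec ht
    have := support_line_aux hconv hderiv haJ htJ
    simp only [hh₁]
    nlinarith
  -- k₁ part
  have p2 : 0 ≤ (⟪(cfc k₁ B) x, x⟫).re := by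
    apply quad_nonneg_aux
    intro t ht
    have htJ : t ∈ J := hBspec ht
    have := support_line_aux hconv hderiv htJ hbJ
    simp only [hk₁]
    linarith
  -- l₁ part
  have p3 : 0 ≤ (⟪(cfc l₁ B) x, x⟫).re := by
    have e : cfc l₁ B = f' b • B + algebraMap ℝ (H →L[ℂ] H) (f b - f a - f' b * b) := by
      rw [hl₁, cfc_add B _ _ (by fun_prop) (by fun_prop), cfc_const_mul_id (f' b) B,
        cfc_const _ _]
    rw [e, h_add, h_smul, h_alg]
    have := support_line_aux hconv hderiv hbJ haJ
    have hf'a : 0 ≤ f' a := hf'nonneg a haJ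
    nlinarith
  linarith
end

section
/- Let A ∈ B(H) be a self-adjoint operator whose spectrum is contained in an interval J, let f : J → ℝ be a continuously differentiable convex function, and let s ∈ J. Then the operator inequalities f′(s)·A − s·f′(s)·1_H ≤ f(A) − f(s)·1_H ≤ f′(A)·A − s·f′(A) hold in the Loewner order. -/
open scoped ComplexInnerProductSpace

lemma grad_aux_stmt12 {J : Set ℝ} {f f' : ℝ → ℝ} (hconv : ConvexOn ℝ J f)
    (hderiv : ∀ t ∈ J, HasDerivWithinAt f (f' t) J t)
    {x y : ℝ} (hx : x ∈ J) (hy : y ∈ J) : f' x * (y - x) ≤ f y - f x := by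
  rcases lt_trichotomy x y with h | rfl | h
  · have hsl := hconv.le_slope_of_hasDerivWithinAt hx hy h (hderiv x hx)
    rw [slope_def_field] at hsl
    exact (le_div_iff₀ (sub_pos.mpr h)).mp hsl
  · simp
  · have hsl := hconv.slope_le_of_hasDerivWithinAt hy hx h (hderiv x hx)
    rw [slope_def_field] at hsl
    have := (div_le_iff₀ (sub_pos.mpr h)).mp hsl
    nlinarith [this]

/-- Operator form of the gradient inequality: for self-adjoint `A` with spectrum in `J`,
convex continuously differentiable `f` and `s ∈ J`,
`f′(s)A − s f′(s) 1 ≤ f(A) − f(s) 1 ≤ f′(A)A − s f′(A)`. -/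
theorem stmt_12
    {H : Type*} [NormedAddCommGroup H] [InnerProductSpace ℂ H] [CompleteSpace H]
    (A : H →L[ℂ] H) (hA : IsSelfAdjoint A)
    (J : Set ℝ) (hAspec : spectrum ℝ A ⊆ J)
    (f f' : ℝ → ℝ) (hconv : ConvexOn ℝ J f)
    (hderiv : ∀ t ∈ J, HasDerivWithinAt f (f' t) J t) (hf'cont : ContinuousOn f' J)
    (s : ℝ) (hs : s ∈ J) :
    f' s • A - (s * f' s) • (1 : H →L[ℂ] H) ≤ cfc f A - f s • (1 : H →L[ℂ] H)
      ∧ cfc f A - f s • (1 : H →L[ℂ] H) ≤ (cfc f' A) * A - s • cfc f' A := by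
  have hfJ : ContinuousOn f J := fun t ht => (hderiv t ht).continuousWithinAt
  have hfs : ContinuousOn f (spectrum ℝ A) := hfJ.mono hAspec
  have hf's : ContinuousOn f' (spectrum ℝ A) := hf'cont.mono hAspec
  have e1 : cfc (fun t => f' s * t - s * f' s) A = f' s • A - (s * f' s) • (1 : H →L[ℂ] H) := by
    rw [cfc_sub _ _ A (by fun_prop) (by fun_prop), cfc_const_mul_id _ A hA, cfc_const _ A hA,
      Algebra.algebraMap_eq_smul_one]
  have e2 : cfc (fun t => f t - f s) A = cfc f A - f s • (1 : H →L[ℂ] H) := by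
    rw [cfc_sub _ _ A hfs (by fun_prop), cfc_const _ A hA, Algebra.algebraMap_eq_smul_one]
  have e3 : cfc (fun t => f' t * t - s * f' t) A = cfc f' A * A - s • cfc f' A := by
    rw [cfc_sub (fun t => f' t * t) (fun t => s * f' t) A (hf's.mul continuousOn_id) (continuousOn_const.mul hf's),
      cfc_mul f' (fun t : ℝ => t) A hf's continuousOn_id, cfc_id' ℝ A hA, cfc_const_mul _ _ A hf's]
  constructor
  · rw [← e1, ← e2]
    refine cfc_mono (fun t ht => ?_) (by fun_prop) (hfs.sub continuousOn_const)
    have := grad_aux_stmt12 hconv hderiv hs (hAspec ht)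
    nlinarith [this]
  · rw [← e2, ← e3]
    refine cfc_mono (fun t ht => ?_) (hfs.sub continuousOn_const)
      ((hf's.mul continuousOn_id).sub (continuousOn_const.mul hf's))
    have := grad_aux_stmt12 hconv hderiv (hAspec ht) hs
    nlinarith [this]
end

section
/- Let Φ₁,…,Φₙ : B(H) → B(K) be positive linear maps with Σᵢ₌₁ⁿ Φᵢ(1_H) = 1_K, let A₁,…,Aₙ ∈ B(H) be self-adjoint operators whose spectra are contained in an interval J, and let f : J → ℝ be a continuous convex function. Then for every unit vector x ∈ K: f(⟨Σᵢ Φᵢ(Aᵢ) x, x⟩) ≤ ⟨Σᵢ Φᵢ(f(Aᵢ)) x, x⟩. -/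
private lemma jensen_aux_left {m M : ℝ} (hmM : m ≤ M) {f : ℝ → ℝ}
    (hcont : ContinuousOn f (Set.Icc m M)) {ε : ℝ} (hε : 0 < ε) :
    ∃ c d : ℝ, (∀ t ∈ Set.Icc m M, c * t + d ≤ f t) ∧ f m - ε ≤ c * m + d := by
  have hmem : m ∈ Set.Icc m M := ⟨le_refl m, hmM⟩
  have hc := hcont m hmem
  rw [Metric.continuousWithinAt_iff] at hc
  obtain ⟨δ, hδ, hδ'⟩ := hc ε hε
  obtain ⟨z, hz, hzmin⟩ := (isCompact_Icc (a := m) (b := M)).exists_isMinOn ⟨m, hmem⟩ hcont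
  set C : ℝ := max 0 ((f m - ε - f z) / δ) with hCdef
  have hC0 : 0 ≤ C := le_max_left _ _
  have hC1 : (f m - ε - f z) / δ ≤ C := le_max_right _ _
  refine ⟨-C, f m - ε + C * m, fun t ht => ?_, le_of_eq (by ring)⟩
  by_cases hd : dist t m < δ
  · have := hδ' ht hd
    rw [Real.dist_eq, abs_lt] at this
    nlinarith [ht.1, mul_nonneg hC0 (by linarith [ht.1] : (0:ℝ) ≤ t - m)]
  · push_neg at hd
    rw [Real.dist_eq, abs_of_nonneg (by linarith [ht.1])] at hd
    have hz' : f z ≤ f t := hzmin ht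
    have : f m - ε - f z ≤ C * δ := by
      rw [div_le_iff₀ hδ] at hC1; linarith
    nlinarith [ht.1, mul_nonneg hC0 (by linarith [ht.1] : (0:ℝ) ≤ t - m), mul_le_mul_of_nonneg_left hd hC0]

private lemma jensen_aux_interior {m M t₀ : ℝ} (hm : m < t₀) (hM : t₀ < M) {f : ℝ → ℝ}
    (hconv : ConvexOn ℝ (Set.Icc m M) f) :
    ∃ c d : ℝ, (∀ t ∈ Set.Icc m M, c * t + d ≤ f t) ∧ f t₀ = c * t₀ + d := by
  set S : Set ℝ := (fun s => (f t₀ - f s) / (t₀ - s)) '' Set.Ico m t₀ with hS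
  have ht₀ : t₀ ∈ Set.Icc m M := ⟨hm.le, hM.le⟩
  have hMmem : M ∈ Set.Icc m M := ⟨(hm.trans hM).le, le_refl M⟩
  have hne : S.Nonempty := ⟨_, m, ⟨le_refl m, hm⟩, rfl⟩
  have hub : ∀ y ∈ S, y ≤ (f M - f t₀) / (M - t₀) := by
    rintro y ⟨s, hs, rfl⟩
    exact hconv.slope_mono_adjacent ⟨hs.1, (hs.2.trans hM).le⟩ hMmem hs.2 hM
  have hbdd : BddAbove S := ⟨_, hub⟩
  set c : ℝ := sSup S with hc
  refine ⟨c, f t₀ - c * t₀, fun t ht => ?_, by ring⟩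
  rcases lt_trichotomy t t₀ with h | h | h
  · have hmem : (f t₀ - f t) / (t₀ - t) ∈ S := ⟨t, ⟨ht.1, h⟩, rfl⟩
    have := le_csSup hbdd hmem
    rw [div_le_iff₀ (by linarith)] at this
    linarith
  · subst h; linarith
  · have : c ≤ (f t - f t₀) / (t - t₀) := by
      refine csSup_le hne ?_
      rintro y ⟨s, hs, rfl⟩
      exact hconv.slope_mono_adjacent ⟨hs.1, (hs.2.trans h).le.trans ht.2⟩ ht hs.2 h
    rw [le_div_iff₀ (by linarith)] at this
    linarith

private lemma jensen_aux {m M t₀ : ℝ} (hm : m ≤ t₀) (hM : t₀ ≤ M) {f : ℝ → ℝ}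
    (hconv : ConvexOn ℝ (Set.Icc m M) f) (hcont : ContinuousOn f (Set.Icc m M))
    {ε : ℝ} (hε : 0 < ε) :
    ∃ c d : ℝ, (∀ t ∈ Set.Icc m M, c * t + d ≤ f t) ∧ f t₀ - ε ≤ c * t₀ + d := by
  rcases eq_or_lt_of_le hm with h | h
  · subst h; exact jensen_aux_left hM hcont hε
  rcases eq_or_lt_of_le hM with h' | h'
  · subst h'
    -- right endpoint: reflect
    have hcont' : ContinuousOn (fun t => f (-t)) (Set.Icc (-t₀) (-m)) := by
      refine hcont.comp continuousOn_neg ?_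
      intro t ht
      exact ⟨by linarith [ht.2], by linarith [ht.1]⟩
    obtain ⟨c, d, h1, h2⟩ := jensen_aux_left (by linarith : -t₀ ≤ -m) hcont' hε
    refine ⟨-c, d, fun t ht => ?_, ?_⟩
    · have := h1 (-t) ⟨by linarith [ht.2], by linarith [ht.1]⟩
      simp only [neg_neg] at this
      linarith
    · simp only [neg_neg] at h2; linarith
  · obtain ⟨c, d, h1, h2⟩ := jensen_aux_interior h h' hconv
    exact ⟨c, d, h1, by linarith⟩

open scoped ComplexInnerProductSpace

/-- **Jensen operator inequality (scalar form).** For positive linear maps `Φ i` summing to the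
identity, self-adjoint `A i` with spectra in the interval `J`, continuous convex `f` and a unit
vector `x`: `f(⟨Σ Φᵢ(Aᵢ) x, x⟩) ≤ ⟨Σ Φᵢ(f(Aᵢ)) x, x⟩`. -/
theorem stmt_13
    {H K : Type*} [NormedAddCommGroup H] [InnerProductSpace ℂ H] [CompleteSpace H]
    [NormedAddCommGroup K] [InnerProductSpace ℂ K] [CompleteSpace K]
    (n : ℕ) (Φ : Fin n → (H →L[ℂ] H) →ₗ[ℂ] (K →L[ℂ] K))
    (hΦpos : ∀ i, ∀ T : H →L[ℂ] H, 0 ≤ T → 0 ≤ Φ i T)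
    (hΦunital : ∑ i, Φ i 1 = 1)
    (A : Fin n → H →L[ℂ] H)
    (hA : ∀ i, IsSelfAdjoint (A i))
    (J : Set ℝ)
    (hAspec : ∀ i, spectrum ℝ (A i) ⊆ J)
    (f : ℝ → ℝ) (hconv : ConvexOn ℝ J f) (hcont : ContinuousOn f J)
    (x : K) (hx : ‖x‖ = 1) :
    f ((⟪(∑ i, Φ i (A i)) x, x⟫).re) ≤ (⟪(∑ i, Φ i (cfc f (A i))) x, x⟫).re := by
  classical
  have hx0 : x ≠ 0 := by intro h; rw [h, norm_zero] at hx; exact zero_ne_one hx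
  have hxx : (⟪x, x⟫ : ℂ) = 1 := by rw [inner_self_eq_norm_sq_to_K, hx]; norm_num
  have hinner : ∀ S T : K →L[ℂ] K, S ≤ T → (⟪S x, x⟫).re ≤ (⟪T x, x⟫).re := by
    intro S T h
    have := ((ContinuousLinearMap.le_def S T).mp h).inner_nonneg_left x
    simp only [ContinuousLinearMap.sub_apply, inner_sub_left, Complex.sub_re,
      RCLike.re_to_complex] at this
    have h' := (Complex.le_def.mp this).1
    simp only [Complex.zero_re, Complex.sub_re] at h'
    linarith
  have halg : ∀ r : ℝ, (⟪(algebraMap ℝ (K →L[ℂ] K) r) x, x⟫).re = r := fun r => by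
    rw [Algebra.algebraMap_eq_smul_one]
    simp [← Complex.coe_smul, inner_smul_left, hxx, hx]
  -- nondegeneracy
  have hn : n ≠ 0 := by
    rintro rfl
    simp only [Finset.univ_eq_empty, Finset.sum_empty] at hΦunital
    have := congrArg (fun T : K →L[ℂ] K => T x) hΦunital
    simp only [ContinuousLinearMap.zero_apply, ContinuousLinearMap.one_apply] at this
    exact hx0 this.symm
  have hHnt : Nontrivial H := by
    by_contra h
    have hs : Subsingleton H := not_nontrivial_iff_subsingleton.mp h
    have h1 : (1 : H →L[ℂ] H) = 0 := by ext y; exact Subsingleton.elim _ _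
    rw [h1] at hΦunital
    simp only [map_zero, Finset.sum_const, smul_zero] at hΦunital
    have := congrArg (fun T : K →L[ℂ] K => T x) hΦunital
    simp only [ContinuousLinearMap.zero_apply, ContinuousLinearMap.one_apply] at this
    exact hx0 this.symm
  have hBnt : Nontrivial (H →L[ℂ] H) := by
    refine ⟨1, 0, fun h => ?_⟩
    obtain ⟨y, hy⟩ := exists_ne (0 : H)
    exact hy (by simpa using congrArg (fun T : H →L[ℂ] H => T y) h)
  -- the compact set containing all spectra
  set S : Set ℝ := ⋃ i, spectrum ℝ (A i) with hSdef
  have hScpt : IsCompact S := isCompact_iUnion fun i => spectrum.isCompact (A i)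
  have hSne : S.Nonempty := by
    obtain ⟨t, ht⟩ := (hA ⟨0, Nat.pos_of_ne_zero hn⟩).spectrum_nonempty
    exact ⟨t, Set.mem_iUnion.mpr ⟨_, ht⟩⟩
  have hSJ : S ⊆ J := Set.iUnion_subset hAspec
  set m : ℝ := sInf S with hmdef
  set M : ℝ := sSup S with hMdef
  have hmS : m ∈ S := hScpt.sInf_mem hSne
  have hMS : M ∈ S := hScpt.sSup_mem hSne
  have hspec : ∀ i, spectrum ℝ (A i) ⊆ Set.Icc m M := fun i y hy =>
    ⟨csInf_le hScpt.bddBelow (Set.mem_iUnion.mpr ⟨i, hy⟩),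
     le_csSup hScpt.bddAbove (Set.mem_iUnion.mpr ⟨i, hy⟩)⟩
  have hIccJ : Set.Icc m M ⊆ J := hconv.1.ordConnected.out (hSJ hmS) (hSJ hMS)
  -- Φ is monotone
  have hΦmono : ∀ i (T T' : H →L[ℂ] H), T ≤ T' → Φ i T ≤ Φ i T' := fun i T T' h => by
    have h2 := hΦpos i (T' - T) (sub_nonneg.mpr h)
    rw [map_sub] at h2
    exact sub_nonneg.mp h2
  have hsum_alg : ∀ r : ℝ,
      ∑ i, Φ i (algebraMap ℝ (H →L[ℂ] H) r) = algebraMap ℝ (K →L[ℂ] K) r := fun r => by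
    simp_rw [Algebra.algebraMap_eq_smul_one, ← Complex.coe_smul, map_smul,
      ← Finset.smul_sum, hΦunital]
  set t₀ : ℝ := (⟪(∑ i, Φ i (A i)) x, x⟫).re with ht₀def
  -- m ≤ t₀ ≤ M
  have hml : m ≤ t₀ := by
    have hop : algebraMap ℝ (K →L[ℂ] K) m ≤ ∑ i, Φ i (A i) := by
      rw [← hsum_alg m]
      refine Finset.sum_le_sum fun i _ => hΦmono i _ _ ?_
      have h := cfc_mono (f := fun _ : ℝ => m) (g := fun t : ℝ => t) (a := A i)
        (fun t ht => (hspec i ht).1) (by fun_prop) (by fun_prop)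
      rwa [cfc_const m (A i) (hA i), cfc_id' ℝ (A i) (hA i)] at h
    have := hinner _ _ hop
    rwa [halg m] at this
  have hMr : t₀ ≤ M := by
    have hop : ∑ i, Φ i (A i) ≤ algebraMap ℝ (K →L[ℂ] K) M := by
      rw [← hsum_alg M]
      refine Finset.sum_le_sum fun i _ => hΦmono i _ _ ?_
      have h := cfc_mono (f := fun t : ℝ => t) (g := fun _ : ℝ => M) (a := A i)
        (fun t ht => (hspec i ht).2) (by fun_prop) (by fun_prop)
      rwa [cfc_const M (A i) (hA i), cfc_id' ℝ (A i) (hA i)] at h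
    have := hinner _ _ hop
    rwa [halg M] at this
  -- conclude via affine minorants
  refine le_of_forall_pos_le_add fun ε hε => ?_
  obtain ⟨c, d, hcd, hline⟩ := jensen_aux hml hMr
    (hconv.subset hIccJ (convex_Icc m M)) (hcont.mono hIccJ) hε
  have hle : ∀ i, c • A i + algebraMap ℝ (H →L[ℂ] H) d ≤ cfc f (A i) := fun i => by
    have h := cfc_mono (f := fun t : ℝ => c * t + d) (g := f) (a := A i)
      (fun t ht => hcd t (hspec i ht)) (by fun_prop)
      ((hcont.mono hIccJ).mono (hspec i))
    rwa [cfc_add (A i) (fun t => c * t) (fun _ => d) (by fun_prop) (by fun_prop),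
      cfc_const_mul c (fun t : ℝ => t) (A i) (by fun_prop), cfc_id' ℝ (A i) (hA i),
      cfc_const d (A i) (hA i)] at h
  have hsum_le : c • (∑ i, Φ i (A i)) + algebraMap ℝ (K →L[ℂ] K) d
      ≤ ∑ i, Φ i (cfc f (A i)) := by
    have h1 : ∑ i, Φ i (c • A i + algebraMap ℝ (H →L[ℂ] H) d)
        ≤ ∑ i, Φ i (cfc f (A i)) :=
      Finset.sum_le_sum fun i _ => hΦmono i _ _ (hle i)
    have h2 : ∑ i, Φ i (c • A i + algebraMap ℝ (H →L[ℂ] H) d)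
        = c • (∑ i, Φ i (A i)) + algebraMap ℝ (K →L[ℂ] K) d := by
      rw [← hsum_alg d]
      simp_rw [map_add, ← Complex.coe_smul, map_smul, Finset.sum_add_distrib,
        ← Finset.smul_sum]
    rwa [h2] at h1
  have hfin := hinner _ _ hsum_le
  have hval : (⟪(c • (∑ i, Φ i (A i)) + algebraMap ℝ (K →L[ℂ] K) d) x, x⟫).re
      = c * t₀ + d := by
    rw [ContinuousLinearMap.add_apply, inner_add_left, Complex.add_re]
    have h1 : (⟪(c • (∑ i, Φ i (A i))) x, x⟫).re = c * t₀ := by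
      simp [← Complex.coe_smul, inner_smul_left, ht₀def]; ring
    have h2 := halg d
    rw [h1, h2]
  rw [hval] at hfin
  linarith
end

section
/- Let A, B ∈ B(H) be positive operators with B ≤ A, and suppose the spectrum of A is contained in [m, M] for some scalars 0 < m < M. Then for every p > 1: Bᵖ ≤ K(m, M, p) · Aᵖ, where K(m, M, p) = ((m·Mᵖ − M·mᵖ)/((p−1)(M−m))) · (((p−1)/p) · (Mᵖ − mᵖ)/(m·Mᵖ − M·mᵖ))ᵖ is the generalized Kantorovich constant. -/
open scoped ComplexInnerProductSpace


open Real

/-- Chord inequality for the convex function `t ^ p` on `[u, U]`. -/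
lemma chord_rpow {u U p s : ℝ} (hu : 0 < u) (huU : u < U) (hp : 1 ≤ p)
    (hs : s ∈ Set.Icc u U) :
    s ^ p ≤ (U ^ p - u ^ p) / (U - u) * s + (U * u ^ p - u * U ^ p) / (U - u) := by
  obtain ⟨hsu, hsU⟩ := hs
  have hUu : (0:ℝ) < U - u := by linarith
  set θ : ℝ := (U - s) / (U - u) with hθ
  have hθ0 : 0 ≤ θ := div_nonneg (by linarith) hUu.le
  have hθ1 : 0 ≤ 1 - θ := by
    rw [hθ]
    rw [sub_nonneg, div_le_one hUu]
    linarith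
  have hcomb : θ • u + (1 - θ) • U = s := by
    simp only [smul_eq_mul, hθ]
    field_simp
    ring
  have key := (convexOn_rpow hp).2 (Set.mem_Ici.mpr hu.le)
    (Set.mem_Ici.mpr (hu.le.trans huU.le)) hθ0 hθ1 (by ring)
  rw [hcomb] at key
  refine key.trans (le_of_eq ?_)
  simp only [smul_eq_mul, hθ]
  field_simp
  ring

/-- Young-based upper bound: `α s + β ≤ Ky s ^ p` for all `s > 0`, where
`Ky = (α/p) * ((p-1)*α/(p*(-β)))^(p-1)`. -/
lemma young_line_le {α β p s : ℝ} (hα : 0 < α) (hβ : β < 0) (hp : 1 < p) (hs : 0 < s) :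
    α * s + β ≤ α / p * ((p - 1) * α / (p * (-β))) ^ (p - 1) * s ^ p := by
  have hp0 : (0:ℝ) < p := by linarith
  have hp1 : (0:ℝ) < p - 1 := by linarith
  set q : ℝ := p / (p - 1) with hq
  have hpq : p.HolderConjugate q := Real.holderConjugate_iff.mpr ⟨hp, by rw [hq]; field_simp; ring⟩
  have hq0 : 0 < q := by rw [hq]; positivity
  have hβ' : 0 < -β := by linarith
  set c : ℝ := q * (-β) / α with hc
  have hc0 : 0 < c := by rw [hc]; positivity
  set y : ℝ := c ^ (1/q) with hy
  have hy0 : 0 < y := rpow_pos_of_pos hc0 _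
  have hyq : y ^ q = c := by
    rw [hy, ← rpow_mul hc0.le, one_div, inv_mul_cancel₀ hq0.ne', rpow_one]
  have hyp : y ^ p = c ^ (p - 1) := by
    rw [hy, ← rpow_mul hc0.le]
    congr 1
    rw [hq]
    field_simp
  have hyppos : 0 < y ^ p := rpow_pos_of_pos hy0 _
  have young := Real.young_inequality_of_nonneg
    (div_nonneg hs.le hy0.le) hy0.le hpq
  rw [div_mul_cancel₀ _ hy0.ne', Real.div_rpow hs.le hy0.le, hyq] at young
  -- young : s ≤ s ^ p / y ^ p / p + c / q
  have hcq : c / q = (-β) / α := by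
    rw [hc]
    field_simp
  rw [hcq] at young
  have step : α * s + β ≤ α / (p * y ^ p) * s ^ p := by
    have := mul_le_mul_of_nonneg_left young hα.le
    calc α * s + β = α * s - (-β) := by ring
    _ ≤ α * (s ^ p / y ^ p / p + -β / α) - (-β) := by nlinarith
    _ = α / (p * y ^ p) * s ^ p := by field_simp; ring
  refine le_trans step (le_of_eq ?_)
  have hcinv : (p - 1) * α / (p * (-β)) = c⁻¹ := by
    rw [hc, hq]
    field_simp
  rw [hcinv, inv_rpow hc0.le, ← hyp]
  field_simp

/-- The main scalar lemma packaging the chord and Young bounds with the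
generalized Kantorovich constant. -/
lemma kantorovich_scalar {m M p : ℝ} (hm : 0 < m) (hmM : m < M) (hp : 1 < p) :
    ∃ α β : ℝ, 0 < α ∧ β < 0 ∧
      (∀ t ∈ Set.Icc m M, (t ^ p)⁻¹ ≤ α * t⁻¹ + β) ∧
      (∀ t : ℝ, 0 < t →
        α * t⁻¹ + β ≤ ((m * M ^ p - M * m ^ p) / ((p - 1) * (M - m))
          * (((p - 1) / p) * ((M ^ p - m ^ p) / (m * M ^ p - M * m ^ p))) ^ p)
            * (t ^ p)⁻¹) := by
  have hM : (0:ℝ) < M := hm.trans hmM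
  have hp0 : (0:ℝ) < p := by linarith
  have hp1 : (0:ℝ) < p - 1 := by linarith
  have hMm : (0:ℝ) < M - m := by linarith
  have ha0 : 0 < m ^ p := Real.rpow_pos_of_pos hm p
  have hb0 : 0 < M ^ p := Real.rpow_pos_of_pos hM p
  have hab : m ^ p < M ^ p := Real.rpow_lt_rpow hm.le hmM hp0
  have hba : M * m ^ p < m * M ^ p := by
    have e1 : m * M ^ p = (m * M) * M ^ (p - 1) := by
      rw [show p = (p-1) + 1 by ring, Real.rpow_add hM, Real.rpow_one]
      ring
    have e2 : M * m ^ p = (m * M) * m ^ (p - 1) := by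
      rw [show p = (p-1) + 1 by ring, Real.rpow_add hm, Real.rpow_one]
      ring
    rw [e1, e2]
    exact mul_lt_mul_of_pos_left (Real.rpow_lt_rpow hm.le hmM hp1) (by positivity)
  have huU : M⁻¹ < m⁻¹ := by rwa [inv_lt_inv₀ hM hm]
  have huU0 : (0:ℝ) < m⁻¹ - M⁻¹ := by linarith
  refine ⟨((m⁻¹) ^ p - (M⁻¹) ^ p) / (m⁻¹ - M⁻¹),
    (m⁻¹ * (M⁻¹) ^ p - M⁻¹ * (m⁻¹) ^ p) / (m⁻¹ - M⁻¹), ?_, ?_, ?_, ?_⟩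
  · rw [Real.inv_rpow hm.le, Real.inv_rpow hM.le]
    apply div_pos _ huU0
    rw [sub_pos, inv_lt_inv₀ hb0 ha0]
    exact hab
  · rw [Real.inv_rpow hm.le, Real.inv_rpow hM.le]
    apply div_neg_of_neg_of_pos _ huU0
    rw [sub_neg, ← mul_inv, ← mul_inv, inv_lt_inv₀ (by positivity) (by positivity)]
    exact hba
  · -- chord step
    intro t ht
    have ht0 : 0 < t := lt_of_lt_of_le hm ht.1
    have hmem : t⁻¹ ∈ Set.Icc M⁻¹ m⁻¹ :=
      ⟨inv_anti₀ ht0 ht.2, inv_anti₀ hm ht.1⟩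
    have := chord_rpow (inv_pos.mpr hM) huU hp.le hmem
    rwa [Real.inv_rpow ht0.le] at this
  · -- Young step with the Kantorovich constant
    intro t ht0
    have hαe : ((m⁻¹) ^ p - (M⁻¹) ^ p) / (m⁻¹ - M⁻¹)
        = m * M * (M ^ p - m ^ p) / ((M - m) * (m ^ p * M ^ p)) := by
      rw [Real.inv_rpow hm.le, Real.inv_rpow hM.le]
      field_simp
    have hβe : (m⁻¹ * (M⁻¹) ^ p - M⁻¹ * (m⁻¹) ^ p) / (m⁻¹ - M⁻¹)
        = (M * m ^ p - m * M ^ p) / (m ^ p * M ^ p * (M - m)) := by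
      rw [Real.inv_rpow hm.le, Real.inv_rpow hM.le]
      field_simp
    have hα0 : 0 < m * M * (M ^ p - m ^ p) / ((M - m) * (m ^ p * M ^ p)) := by
      have : 0 < M ^ p - m ^ p := by linarith
      positivity
    have hβ0 : (M * m ^ p - m * M ^ p) / (m ^ p * M ^ p * (M - m)) < 0 :=
      div_neg_of_neg_of_pos (by linarith) (by positivity)
    rw [hαe, hβe]
    have key := young_line_le hα0 hβ0 hp (inv_pos.mpr ht0)
    rw [Real.inv_rpow ht0.le] at key
    refine key.trans (le_of_eq ?_)
    congr 1
    -- now a pure algebraic identity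
    obtain ⟨α, hαd⟩ : ∃ x : ℝ, x = m * M * (M ^ p - m ^ p) / ((M - m) * (m ^ p * M ^ p)) :=
      ⟨_, rfl⟩
    obtain ⟨a, had⟩ : ∃ x : ℝ, x = m ^ p := ⟨_, rfl⟩
    obtain ⟨b, hbd⟩ : ∃ x : ℝ, x = M ^ p := ⟨_, rfl⟩
    obtain ⟨w, hwd⟩ : ∃ x : ℝ, x = (p - 1) / p * ((b - a) / (m * b - M * a)) := ⟨_, rfl⟩
    have ha0' : 0 < a := had ▸ ha0
    have hb0' : 0 < b := hbd ▸ hb0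
    have hab' : a < b := by rw [had, hbd]; exact hab
    have hba' : M * a < m * b := by rw [had, hbd]; exact hba
    have hw0 : 0 < w := by
      rw [hwd]
      have h1 : 0 < b - a := by linarith
      have h2 : 0 < m * b - M * a := by linarith
      positivity
    rw [← hαd, ← had, ← hbd, ← hwd]
    have hαe' : α = m * M * (b - a) / ((M - m) * (a * b)) := by
      rw [hαd, had, hbd]
    have hneg : -((M * a - m * b) / (a * b * (M - m))) = (m * b - M * a) / (a * b * (M - m)) := by
      ring
    rw [hneg]
    have step1 : (p - 1) * α / (p * ((m * b - M * a) / (a * b * (M - m)))) = (m * M) * w := by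
      rw [hαe', hwd]
      have hmb : m * b - M * a ≠ 0 := by linarith
      have hbma : b - a ≠ 0 := by linarith
      field_simp
    have step2 : ((m * M) * w) ^ (p - 1) = (m * M) ^ (p-1) * w ^ (p-1) :=
      Real.mul_rpow (by positivity) hw0.le
    have step3 : (m * M : ℝ) ^ (p - 1) = a * b / (m * M) := by
      rw [Real.rpow_sub (by positivity), Real.rpow_one, Real.mul_rpow hm.le hM.le, ← had, ← hbd]
    have step4 : w ^ (p - 1) = w ^ p / w := by
      rw [Real.rpow_sub hw0, Real.rpow_one]
    rw [step1, step2, step3, step4]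
    have hcoef : (m * M * (b - a) / ((M - m) * (a * b))) / p * (a * b / (m * M)) / w
        = (m * b - M * a) / ((p - 1) * (M - m)) := by
      rw [hwd]
      have hmb : m * b - M * a ≠ 0 := by linarith
      have hbma : b - a ≠ 0 := by linarith
      field_simp
    calc α / p * (a * b / (m * M) * (w ^ p / w))
        = ((m * M * (b - a) / ((M - m) * (a * b))) / p * (a * b / (m * M)) / w) * w ^ p := by
          rw [hαe']; ring
      _ = (m * b - M * a) / ((p - 1) * (M - m)) * w ^ p := by rw [hcoef]

section OperatorPart

variable {𝒜 : Type*} [CStarAlgebra 𝒜] [PartialOrder 𝒜] [StarOrderedRing 𝒜]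

lemma my_smul_nonneg {c : ℝ} (hc : 0 ≤ c) {X : 𝒜} (hX : 0 ≤ X) : 0 ≤ c • X := by
  have hsa : IsSelfAdjoint X := IsSelfAdjoint.of_nonneg hX
  have h1 : c • X = cfc (fun t : ℝ => c * t) X := by
    rw [cfc_const_mul c (fun t : ℝ => t) X (by fun_prop), cfc_id' ℝ X]
  rw [h1]
  exact cfc_nonneg fun x hx => mul_nonneg hc (spectrum_nonneg_of_nonneg hX hx)

lemma my_smul_le_smul {c : ℝ} (hc : 0 ≤ c) {X Y : 𝒜} (h : X ≤ Y) : c • X ≤ c • Y := by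
  rw [← sub_nonneg, ← smul_sub]
  exact my_smul_nonneg hc (sub_nonneg.2 h)

lemma my_cfc_mul_eq_one {X : 𝒜} (hsa : IsSelfAdjoint X) (f g : ℝ → ℝ)
    (hfg : ∀ t ∈ spectrum ℝ X, f t * g t = 1)
    (hf : ContinuousOn f (spectrum ℝ X)) (hg : ContinuousOn g (spectrum ℝ X)) :
    cfc f X * cfc g X = 1 := by
  rw [← cfc_mul f g X hf hg]
  exact (cfc_congr hfg).trans (cfc_one ℝ X)

/-- Core inequality, assuming the smaller operator is invertible. -/
lemma main_aux (A B : 𝒜) (hApos : 0 ≤ A) (hBpos : 0 ≤ B)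
    (m M p K : ℝ) (hm : 0 < m) (hmM : m < M) (hp : 1 < p) (hK : 0 < K)
    (hAspec : spectrum ℝ A ⊆ Set.Icc m M) (hBA : B ≤ A)
    (hB0 : 0 ∉ spectrum ℝ B)
    (α β : ℝ) (hα : 0 < α)
    (hchord : ∀ t ∈ Set.Icc m M, (t ^ p)⁻¹ ≤ α * t⁻¹ + β)
    (hyoung : ∀ t : ℝ, 0 < t → α * t⁻¹ + β ≤ K * (t ^ p)⁻¹) :
    cfc (fun t : ℝ => t ^ p) B ≤ K • cfc (fun t : ℝ => t ^ p) A := by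
  have hAsa : IsSelfAdjoint A := .of_nonneg hApos
  have hBsa : IsSelfAdjoint B := .of_nonneg hBpos
  have hp0 : (0:ℝ) < p := by linarith
  have hA0 : 0 ∉ spectrum ℝ A := by
    intro h
    have := (hAspec h).1
    linarith
  have hApt : ∀ t ∈ spectrum ℝ A, 0 < t := fun t ht => lt_of_lt_of_le hm (hAspec ht).1
  have hBpt : ∀ t ∈ spectrum ℝ B, 0 < t := fun t ht =>
    lt_of_le_of_ne (spectrum_nonneg_of_nonneg hBpos ht) (by rintro rfl; exact hB0 ht)
  -- continuity facts
  have hCrp : ∀ S : Set ℝ, ContinuousOn (fun t : ℝ => t ^ p) S := fun S t _ =>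
    (Real.continuousAt_rpow_const t p (Or.inr hp0.le)).continuousWithinAt
  have hCinvA : ContinuousOn (fun t : ℝ => t⁻¹) (spectrum ℝ A) := fun t ht =>
    (continuousAt_inv₀ (hApt t ht).ne').continuousWithinAt
  have hCinvB : ContinuousOn (fun t : ℝ => t⁻¹) (spectrum ℝ B) := fun t ht =>
    (continuousAt_inv₀ (hBpt t ht).ne').continuousWithinAt
  have hCrpinvA : ContinuousOn (fun t : ℝ => (t ^ p)⁻¹) (spectrum ℝ A) := fun t ht =>
    (((Real.continuousAt_rpow_const t p (Or.inr hp0.le))).inv₀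
      (Real.rpow_pos_of_pos (hApt t ht) p).ne').continuousWithinAt
  have hCrpinvB : ContinuousOn (fun t : ℝ => (t ^ p)⁻¹) (spectrum ℝ B) := fun t ht =>
    (((Real.continuousAt_rpow_const t p (Or.inr hp0.le))).inv₀
      (Real.rpow_pos_of_pos (hBpt t ht) p).ne').continuousWithinAt
  have hCaffA : ContinuousOn (fun t : ℝ => α * t⁻¹ + β) (spectrum ℝ A) :=
    (hCinvA.const_smul α).add continuousOn_const
  have hCaffB : ContinuousOn (fun t : ℝ => α * t⁻¹ + β) (spectrum ℝ B) :=
    (hCinvB.const_smul α).add continuousOn_const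
  have hCKrpinvB : ContinuousOn (fun t : ℝ => K * (t ^ p)⁻¹) (spectrum ℝ B) :=
    hCrpinvB.const_smul K
  have hCKinvrpB : ContinuousOn (fun t : ℝ => K⁻¹ * t ^ p) (spectrum ℝ B) :=
    (hCrp _).const_smul K⁻¹
  -- units
  set UA : 𝒜ˣ := ⟨A, cfc (fun t : ℝ => t⁻¹) A,
    by
      nth_rewrite 1 [← cfc_id' ℝ A]
      exact my_cfc_mul_eq_one hAsa _ _ (fun t ht => mul_inv_cancel₀ (hApt t ht).ne')
        (by fun_prop) hCinvA,
    by
      nth_rewrite 2 [← cfc_id' ℝ A]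
      exact my_cfc_mul_eq_one hAsa _ _ (fun t ht => inv_mul_cancel₀ (hApt t ht).ne')
        hCinvA (by fun_prop)⟩ with hUA
  set UB : 𝒜ˣ := ⟨B, cfc (fun t : ℝ => t⁻¹) B,
    by
      nth_rewrite 1 [← cfc_id' ℝ B]
      exact my_cfc_mul_eq_one hBsa _ _ (fun t ht => mul_inv_cancel₀ (hBpt t ht).ne')
        (by fun_prop) hCinvB,
    by
      nth_rewrite 2 [← cfc_id' ℝ B]
      exact my_cfc_mul_eq_one hBsa _ _ (fun t ht => inv_mul_cancel₀ (hBpt t ht).ne')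
        hCinvB (by fun_prop)⟩ with hUB
  have hinvle : cfc (fun t : ℝ => t⁻¹) A ≤ cfc (fun t : ℝ => t⁻¹) B := by
    have := CStarAlgebra.inv_le_inv (a := UB) (b := UA) hBpos hBA
    exact this
  -- chord step on A
  have S2 : cfc (fun t : ℝ => (t ^ p)⁻¹) A ≤ cfc (fun t : ℝ => α * t⁻¹ + β) A :=
    cfc_mono (fun t ht => hchord t (hAspec ht)) hCrpinvA hCaffA
  -- splitting the affine function
  have hsplitA : cfc (fun t : ℝ => α * t⁻¹ + β) A
      = α • cfc (fun t : ℝ => t⁻¹) A + algebraMap ℝ 𝒜 β := by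
    rw [cfc_add A (fun t : ℝ => α * t⁻¹) (fun _ : ℝ => β) (hCinvA.const_smul α)
      continuousOn_const, cfc_const_mul α (fun t : ℝ => t⁻¹) A hCinvA, cfc_const β A]
  have hsplitB : cfc (fun t : ℝ => α * t⁻¹ + β) B
      = α • cfc (fun t : ℝ => t⁻¹) B + algebraMap ℝ 𝒜 β := by
    rw [cfc_add B (fun t : ℝ => α * t⁻¹) (fun _ : ℝ => β) (hCinvB.const_smul α)
      continuousOn_const, cfc_const_mul α (fun t : ℝ => t⁻¹) B hCinvB, cfc_const β B]
  have S3 : cfc (fun t : ℝ => α * t⁻¹ + β) A ≤ cfc (fun t : ℝ => α * t⁻¹ + β) B := by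
    rw [hsplitA, hsplitB]
    exact add_le_add_left (my_smul_le_smul hα.le hinvle) _
  -- Young step on B
  have S4 : cfc (fun t : ℝ => α * t⁻¹ + β) B ≤ cfc (fun t : ℝ => K * (t ^ p)⁻¹) B :=
    cfc_mono (fun t ht => hyoung t (hBpt t ht)) hCaffB hCKrpinvB
  have S : cfc (fun t : ℝ => (t ^ p)⁻¹) A ≤ cfc (fun t : ℝ => K * (t ^ p)⁻¹) B :=
    (S2.trans S3).trans S4
  -- invert both sides
  set UX : 𝒜ˣ := ⟨cfc (fun t : ℝ => (t ^ p)⁻¹) A, cfc (fun t : ℝ => t ^ p) A,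
    my_cfc_mul_eq_one hAsa _ _
      (fun t ht => inv_mul_cancel₀ (Real.rpow_pos_of_pos (hApt t ht) p).ne')
      hCrpinvA (hCrp _),
    my_cfc_mul_eq_one hAsa _ _
      (fun t ht => mul_inv_cancel₀ (Real.rpow_pos_of_pos (hApt t ht) p).ne')
      (hCrp _) hCrpinvA⟩ with hUX
  set UY : 𝒜ˣ := ⟨cfc (fun t : ℝ => K * (t ^ p)⁻¹) B, cfc (fun t : ℝ => K⁻¹ * t ^ p) B,
    my_cfc_mul_eq_one hBsa _ _
      (fun t ht => by
        have h1 : (t:ℝ) ^ p ≠ 0 := (Real.rpow_pos_of_pos (hBpt t ht) p).ne'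
        field_simp) hCKrpinvB hCKinvrpB,
    my_cfc_mul_eq_one hBsa _ _
      (fun t ht => by
        have h1 : (t:ℝ) ^ p ≠ 0 := (Real.rpow_pos_of_pos (hBpt t ht) p).ne'
        field_simp) hCKinvrpB hCKrpinvB⟩ with hUY
  have hXpos : 0 ≤ (UX : 𝒜) :=
    cfc_nonneg fun t ht => (inv_pos.mpr (Real.rpow_pos_of_pos (hApt t ht) p)).le
  have hfinal : cfc (fun t : ℝ => K⁻¹ * t ^ p) B ≤ cfc (fun t : ℝ => t ^ p) A := by
    have := CStarAlgebra.inv_le_inv (a := UX) (b := UY) hXpos S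
    exact this
  rw [cfc_const_mul K⁻¹ (fun t : ℝ => t ^ p) B (hCrp _)] at hfinal
  calc cfc (fun t : ℝ => t ^ p) B
      = K • (K⁻¹ • cfc (fun t : ℝ => t ^ p) B) := by
        rw [smul_smul, mul_inv_cancel₀ hK.ne', one_smul]
    _ ≤ K • cfc (fun t : ℝ => t ^ p) A := my_smul_le_smul hK.le hfinal

end OperatorPart


set_option maxHeartbeats 2000000 in
/-- **Furuta's order preserving theorem (Theorem 1.1).** If `0 ≤ B ≤ A` and
`σ(A) ⊆ [m, M]` with `0 < m < M`, then `Bᵖ ≤ K(m, M, p) Aᵖ` for every `p > 1`, where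
`K(m, M, p)` is the generalized Kantorovich constant. -/
theorem stmt_14
    {H : Type*} [NormedAddCommGroup H] [InnerProductSpace ℂ H] [CompleteSpace H]
    (A B : H →L[ℂ] H) (hApos : 0 ≤ A) (hBpos : 0 ≤ B)
    (m M : ℝ) (hm : 0 < m) (hmM : m < M)
    (hAspec : spectrum ℝ A ⊆ Set.Icc m M)
    (hBA : B ≤ A)
    (p : ℝ) (hp : 1 < p) :
    cfc (fun t : ℝ => t ^ p) B
      ≤ ((m * M ^ p - M * m ^ p) / ((p - 1) * (M - m))
          * (((p - 1) / p) * ((M ^ p - m ^ p) / (m * M ^ p - M * m ^ p))) ^ p)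
        • cfc (fun t : ℝ => t ^ p) A := by
  obtain ⟨α, β, hα, hβ, hchord, hyoung⟩ := kantorovich_scalar hm hmM hp
  set Kc : ℝ := (m * M ^ p - M * m ^ p) / ((p - 1) * (M - m))
      * (((p - 1) / p) * ((M ^ p - m ^ p) / (m * M ^ p - M * m ^ p))) ^ p with hKc
  have hp0 : (0:ℝ) < p := by linarith
  -- positivity of the Kantorovich constant
  have hKpos : 0 < Kc := by
    have ht0 : (0:ℝ) < α / (-(2*β)) := by
      have : (0:ℝ) < -(2*β) := by linarith
      positivity
    have h := hyoung _ ht0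
    have he : α * (α / (-(2*β)))⁻¹ + β = -β := by
      have hβ' : β ≠ 0 := hβ.ne
      field_simp
      ring
    rw [he] at h
    have h3 : 0 < ((α / (-(2*β))) ^ p)⁻¹ :=
      inv_pos.mpr (Real.rpow_pos_of_pos ht0 p)
    by_contra hneg
    push_neg at hneg
    nlinarith
  have hAsa : IsSelfAdjoint A := .of_nonneg hApos
  have hBsa : IsSelfAdjoint B := .of_nonneg hBpos
  have h01 : (0:H →L[ℂ] H) ≤ 1 := by simpa using star_mul_self_nonneg (1 : H →L[ℂ] H)
  have hm1 : algebraMap ℝ (H →L[ℂ] H) m ≤ A := by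
    have := algebraMap_le_cfc (fun t : ℝ => t) m A (fun t ht => (hAspec ht).1) (by fun_prop)
    rwa [cfc_id' ℝ A] at this
  have key : ∀ ε ∈ Set.Ioo (0:ℝ) 1,
      cfc (fun t : ℝ => t ^ p) B ≤ ((((1-ε) ^ p)⁻¹ * Kc)) • cfc (fun t : ℝ => t ^ p) A := by
    rintro ε ⟨hε0, hε1⟩
    have h1ε : (0:ℝ) < 1 - ε := by linarith
    set Bε : H →L[ℂ] H := (1-ε) • B + (ε*m) • 1 with hBεd
    have hBεpos : 0 ≤ Bε :=
      add_nonneg (my_smul_nonneg h1ε.le hBpos) (my_smul_nonneg (by positivity) h01)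
    have c2 : (ε*m) • (1 : H →L[ℂ] H) ≤ ε • A := by
      rw [show (ε*m) • (1 : H →L[ℂ] H) = ε • (m • 1) by rw [smul_smul]]
      apply my_smul_le_smul hε0.le
      rw [← Algebra.algebraMap_eq_smul_one]
      exact hm1
    have hBεA : Bε ≤ A := by
      calc Bε ≤ (1-ε) • A + ε • A :=
            add_le_add (my_smul_le_smul h1ε.le hBA) c2
        _ = A := by rw [← add_smul]; norm_num
    have hBεunit : IsUnit Bε := by
      refine (fun hu h0 hle => CStarAlgebra.isUnit_of_le (algebraMap ℝ (H →L[ℂ] H) (ε*m)) hle ⟨h0, hu⟩) ?_ ?_ ?_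
      · exact (isUnit_iff_ne_zero.mpr (by positivity)).map (algebraMap ℝ (H →L[ℂ] H))
      · rw [Algebra.algebraMap_eq_smul_one]
        exact my_smul_nonneg (by positivity) h01
      · rw [Algebra.algebraMap_eq_smul_one]
        exact le_add_of_nonneg_left (my_smul_nonneg h1ε.le hBpos)
    have hBε0 : 0 ∉ spectrum ℝ Bε := (spectrum.zero_notMem_iff ℝ).mpr hBεunit
    have main := main_aux A Bε hApos hBεpos m M p Kc hm hmM hp hKpos hAspec hBεA hBε0
      α β hα hchord hyoung
    -- compare `B ^ p` with `Bε ^ p`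
    have haff : Bε = cfc (fun t : ℝ => (1-ε) * t + ε*m) B := by
      rw [cfc_add B (fun t : ℝ => (1-ε) * t) (fun _ : ℝ => ε*m) (by fun_prop)
        continuousOn_const, cfc_const_mul (1-ε) (fun t : ℝ => t) B (by fun_prop),
        cfc_id' ℝ B, cfc_const (ε*m) B, Algebra.algebraMap_eq_smul_one]
    have hcomp : cfc (fun t : ℝ => t ^ p) Bε
        = cfc (fun t : ℝ => ((1-ε) * t + ε*m) ^ p) B := by
      rw [haff, ← cfc_comp' (fun t : ℝ => t ^ p) (fun t : ℝ => (1-ε) * t + ε*m) B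
        (fun t _ => (Real.continuousAt_rpow_const t p (Or.inr hp0.le)).continuousWithinAt)
        (by fun_prop)]
    have hbound : cfc (fun t : ℝ => t ^ p) B
        ≤ cfc (fun t : ℝ => ((1-ε) ^ p)⁻¹ * (((1-ε) * t + ε*m) ^ p)) B := by
      apply cfc_mono
      · intro t ht
        have ht0 : 0 ≤ t := spectrum_nonneg_of_nonneg hBpos ht
        have e1 : ((1-ε) * t) ^ p = (1-ε) ^ p * t ^ p := Real.mul_rpow h1ε.le ht0
        have e2 : ((1-ε) * t) ^ p ≤ ((1-ε) * t + ε*m) ^ p := by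
          apply Real.rpow_le_rpow (by positivity) _ hp0.le
          nlinarith
        have h3 : (0:ℝ) < (1-ε) ^ p := Real.rpow_pos_of_pos h1ε p
        rw [show t ^ p = ((1-ε) ^ p)⁻¹ * ((1-ε) ^ p * t ^ p) by
          rw [← mul_assoc, inv_mul_cancel₀ h3.ne', one_mul]]
        rw [← e1]
        exact mul_le_mul_of_nonneg_left e2 (by positivity)
      · exact fun t _ => (Real.continuousAt_rpow_const t p (Or.inr hp0.le)).continuousWithinAt
      · apply ContinuousOn.const_smul _ (((1-ε) ^ p)⁻¹)
        intro t _
        exact ((continuous_const.mul continuous_id').add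
          continuous_const).continuousAt.rpow_const (Or.inr hp0.le) |>.continuousWithinAt
    have hbound2 : cfc (fun t : ℝ => t ^ p) B
        ≤ ((1-ε) ^ p)⁻¹ • cfc (fun t : ℝ => t ^ p) Bε := by
      rw [hcomp, ← cfc_const_mul (((1-ε) ^ p)⁻¹) (fun t : ℝ => ((1-ε) * t + ε*m) ^ p) B
        (fun t _ => ((continuous_const.mul continuous_id').add
          continuous_const).continuousAt.rpow_const (Or.inr hp0.le) |>.continuousWithinAt)]
      exact hbound
    calc cfc (fun t : ℝ => t ^ p) B
        ≤ ((1-ε) ^ p)⁻¹ • cfc (fun t : ℝ => t ^ p) Bε := hbound2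
      _ ≤ ((1-ε) ^ p)⁻¹ • (Kc • cfc (fun t : ℝ => t ^ p) A) :=
          my_smul_le_smul (inv_nonneg.mpr (Real.rpow_pos_of_pos h1ε p).le) main
      _ = (((1-ε) ^ p)⁻¹ * Kc) • cfc (fun t : ℝ => t ^ p) A := by rw [smul_smul]
  -- take the limit ε → 0⁺
  have hcont : ContinuousAt (fun ε : ℝ => ((1-ε) ^ p)⁻¹ * Kc) 0 := by
    have h1 : ContinuousAt (fun ε : ℝ => (1-ε) ^ p) 0 :=
      (continuous_const.sub continuous_id').continuousAt.rpow_const (Or.inr hp0.le)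
    have h2 : (fun ε : ℝ => (1-ε) ^ p) 0 ≠ 0 := by norm_num [Real.one_rpow]
    exact (h1.inv₀ h2).mul continuousAt_const
  have hval : (fun ε : ℝ => ((1-ε) ^ p)⁻¹ * Kc) 0 = Kc := by
    norm_num [Real.one_rpow]
  have hlim : Filter.Tendsto (fun ε : ℝ => (((1-ε) ^ p)⁻¹ * Kc) • cfc (fun t : ℝ => t ^ p) A)
      (nhdsWithin 0 (Set.Ioi 0)) (nhds (Kc • cfc (fun t : ℝ => t ^ p) A)) := by
    have t0 := hcont.tendsto
    norm_num [Real.one_rpow] at t0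
    have t1 : Filter.Tendsto (fun ε : ℝ => ((1-ε) ^ p)⁻¹ * Kc)
        (nhdsWithin 0 (Set.Ioi 0)) (nhds Kc) :=
      t0.mono_left (nhdsWithin_le_nhds (s := Set.Ioi 0))
    exact t1.smul_const (cfc (fun t : ℝ => t ^ p) A)
  refine ge_of_tendsto hlim ?_
  filter_upwards [Ioo_mem_nhdsGT_of_mem (by constructor <;> norm_num : (0:ℝ) ∈ Set.Ico 0 1)]
    with ε hε using key ε hε
end

section
/- Let A, B ∈ B(H) be positive operators with B ≤ A and with spectra of both A and B contained in [m, M] for some scalars 0 < m < M, and let f : [m, M] → ℝ be an increasing convex continuous function. Then for every α > 0: f(B) ≤ α·f(A) + β·1_H, where β = max over t ∈ [m, M] of { a_f·t + b_f − α·f(t) }, with a_f = (f(M) − f(m))/(M − m) and b_f = (M·f(m) − m·f(M))/(M − m). -/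
open scoped ComplexInnerProductSpace

lemma chord_aux (m M : ℝ) (hmM : m < M) (f : ℝ → ℝ)
    (hconv : ConvexOn ℝ (Set.Icc m M) f) {t : ℝ} (ht : t ∈ Set.Icc m M) :
    f t ≤ (f M - f m) / (M - m) * t + (M * f m - m * f M) / (M - m) := by
  have hne : M - m ≠ 0 := by linarith
  have h1 : (0:ℝ) ≤ (M - t) / (M - m) := by
    apply div_nonneg <;> [linarith [ht.2]; linarith]
  have h2 : (0:ℝ) ≤ (t - m) / (M - m) := by
    apply div_nonneg <;> [linarith [ht.1]; linarith]
  have h3 : (M - t) / (M - m) + (t - m) / (M - m) = 1 := by field_simp; ring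
  have key := hconv.2 (Set.left_mem_Icc.2 hmM.le) (Set.right_mem_Icc.2 hmM.le) h1 h2 h3
  simp only [smul_eq_mul] at key
  have ht' : (M - t) / (M - m) * m + (t - m) / (M - m) * M = t := by
    field_simp
    ring
  rw [ht'] at key
  refine key.trans (le_of_eq ?_)
  field_simp
  ring

set_option synthInstance.maxHeartbeats 1000000 in
set_option maxHeartbeats 1000000 in
/-- **Theorem 1.2.** If `0 ≤ B ≤ A`, the spectra of `A` and `B` lie in `[m, M]` with
`0 < m < M`, and `f` is an increasing convex continuous function on `[m, M]`, then for every
`α > 0` we have `f(B) ≤ α f(A) + β 1`, with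
`β = max_{m ≤ t ≤ M} { a_f t + b_f − α f(t) }`. -/
theorem stmt_15
    {H : Type*} [NormedAddCommGroup H] [InnerProductSpace ℂ H] [CompleteSpace H]
    (A B : H →L[ℂ] H) (hApos : 0 ≤ A) (hBpos : 0 ≤ B)
    (m M : ℝ) (hm : 0 < m) (hmM : m < M)
    (hAspec : spectrum ℝ A ⊆ Set.Icc m M) (hBspec : spectrum ℝ B ⊆ Set.Icc m M)
    (f : ℝ → ℝ) (hmono : MonotoneOn f (Set.Icc m M))
    (hconv : ConvexOn ℝ (Set.Icc m M) f) (hcont : ContinuousOn f (Set.Icc m M))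
    (hBA : B ≤ A)
    (α : ℝ) (hα : 0 < α)
    (β : ℝ)
    (hβ : β = sSup ((fun t : ℝ =>
        ((f M - f m) / (M - m)) * t + ((M * f m - m * f M) / (M - m)) - α * f t)
      '' Set.Icc m M)) :
    cfc f B ≤ α • cfc f A + β • (1 : H →L[ℂ] H) := by
  have hA : IsSelfAdjoint A := .of_nonneg hApos
  have hB : IsSelfAdjoint B := .of_nonneg hBpos
  set af : ℝ := (f M - f m) / (M - m) with haf_def
  set bf : ℝ := (M * f m - m * f M) / (M - m) with hbf_def
  have haf : 0 ≤ af := by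
    apply div_nonneg _ (by linarith)
    have := hmono (Set.left_mem_Icc.2 hmM.le) (Set.right_mem_Icc.2 hmM.le) hmM.le
    linarith
  set g : ℝ → ℝ := fun t => af * t + bf with hg_def
  have hgcont : Continuous g := by continuity
  -- Step 1 : cfc f B ≤ cfc g B
  have step1 : cfc f B ≤ cfc g B :=
    cfc_mono (fun x hx => chord_aux m M hmM f hconv (hBspec hx))
      (hcont.mono hBspec) hgcont.continuousOn
  -- Step 2 : cfc g B = af • B + bf • 1
  have hcfcg : ∀ (T : H →L[ℂ] H), IsSelfAdjoint T → cfc g T = af • T + bf • 1 := by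
    intro T hT
    rw [hg_def]
    rw [cfc_add (a := T) (fun t => af * t) (fun _ => bf)
        ((continuous_const.mul continuous_id).continuousOn) continuousOn_const,
      cfc_const_mul_id af T hT, cfc_const bf T hT, Algebra.algebraMap_eq_smul_one]
  -- Step 3 : af • B + bf • 1 ≤ af • A + bf • 1
  have step3 : af • B + bf • (1 : H →L[ℂ] H) ≤ af • A + bf • 1 := by
    exact add_le_add_left (smul_le_smul_of_nonneg_left hBA haf) _
  -- Step 5 : cfc g A ≤ cfc (fun t => α * f t + β) A
  have hcont2 : ContinuousOn (fun t => af * t + bf - α * f t) (Set.Icc m M) :=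
    (hgcont.continuousOn).sub (continuousOn_const.mul hcont)
  have hbdd : BddAbove ((fun t : ℝ => af * t + bf - α * f t) '' Set.Icc m M) :=
    (isCompact_Icc.image_of_continuousOn hcont2).bddAbove
  have step5 : cfc g A ≤ cfc (fun t => α * f t + β) A := by
    refine cfc_mono (fun x hx => ?_) hgcont.continuousOn
      ((continuousOn_const.mul (hcont.mono hAspec)).add continuousOn_const)
    have hmem : af * x + bf - α * f x ∈
        (fun t : ℝ => af * t + bf - α * f t) '' Set.Icc m M :=
      Set.mem_image_of_mem _ (hAspec hx)
    have := le_csSup hbdd hmem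
    rw [← hβ] at this
    simp only [hg_def]
    linarith
  -- Step 6
  have step6 : cfc (fun t => α * f t + β) A = α • cfc f A + β • 1 := by
    rw [cfc_add (a := A) (fun t => α * f t) (fun _ => β)
      (continuousOn_const.mul (hcont.mono hAspec)) continuousOn_const,
      cfc_const_mul α f A (hcont.mono hAspec), cfc_const β A hA,
      Algebra.algebraMap_eq_smul_one]
  calc cfc f B ≤ cfc g B := step1
    _ = af • B + bf • 1 := hcfcg B hB
    _ ≤ af • A + bf • 1 := step3
    _ = cfc g A := (hcfcg A hA).symm
    _ ≤ cfc (fun t => α * f t + β) A := step5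
    _ = α • cfc f A + β • 1 := step6
end

section
/- Let A, B ∈ B(H) be positive operators with B ≤ A and with spectra of both A and B contained in [m, M] for some scalars 0 < m < M, and let f : [m, M] → ℝ be a decreasing convex continuous function. Then for every α > 0: f(A) ≤ α·f(B) + β·1_H, where β = max over t ∈ [m, M] of { a_f·t + b_f − α·f(t) }, with a_f = (f(M) − f(m))/(M − m) and b_f = (M·f(m) − m·f(M))/(M − m). -/
open scoped ComplexInnerProductSpace

set_option synthInstance.maxHeartbeats 1000000 in
set_option maxHeartbeats 1000000 in
private theorem smul_mono_aux
    {H : Type*} [NormedAddCommGroup H] [InnerProductSpace ℂ H] [CompleteSpace H]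
    (T : H →L[ℂ] H) (hT : 0 ≤ T) (r : ℝ) (hr : 0 ≤ r) : 0 ≤ r • T :=
  smul_nonneg hr hT

set_option synthInstance.maxHeartbeats 1000000 in
set_option maxHeartbeats 1000000 in
/-- **Theorem 1.3.** If `0 ≤ B ≤ A`, the spectra of `A` and `B` lie in `[m, M]` with
`0 < m < M`, and `f` is a decreasing convex continuous function on `[m, M]`, then for every
`α > 0` we have `f(A) ≤ α f(B) + β 1`, with
`β = max_{m ≤ t ≤ M} { a_f t + b_f − α f(t) }`. -/
theorem stmt_16
    {H : Type*} [NormedAddCommGroup H] [InnerProductSpace ℂ H] [CompleteSpace H]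
    (A B : H →L[ℂ] H) (hApos : 0 ≤ A) (hBpos : 0 ≤ B)
    (m M : ℝ) (hm : 0 < m) (hmM : m < M)
    (hAspec : spectrum ℝ A ⊆ Set.Icc m M) (hBspec : spectrum ℝ B ⊆ Set.Icc m M)
    (f : ℝ → ℝ) (hanti : AntitoneOn f (Set.Icc m M))
    (hconv : ConvexOn ℝ (Set.Icc m M) f) (hcont : ContinuousOn f (Set.Icc m M))
    (hBA : B ≤ A)
    (α : ℝ) (hα : 0 < α)
    (β : ℝ)
    (hβ : β = sSup ((fun t : ℝ =>
        ((f M - f m) / (M - m)) * t + ((M * f m - m * f M) / (M - m)) - α * f t)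
      '' Set.Icc m M)) :
    cfc f A ≤ α • cfc f B + β • (1 : H →L[ℂ] H) := by
  have hAsa : IsSelfAdjoint A := .of_nonneg hApos
  have hBsa : IsSelfAdjoint B := .of_nonneg hBpos
  set c : ℝ := (f M - f m) / (M - m) with hc
  set d : ℝ := (M * f m - m * f M) / (M - m) with hd
  set L : ℝ → ℝ := fun t => c * t + d with hL
  have hMm : (0:ℝ) < M - m := by linarith
  -- chord inequality: f ≤ L on [m, M]
  have chord : ∀ t ∈ Set.Icc m M, f t ≤ L t := by
    rintro t ⟨ht1, ht2⟩
    have ha : (0:ℝ) ≤ (M - t)/(M - m) := div_nonneg (by linarith) hMm.le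
    have hb : (0:ℝ) ≤ (t - m)/(M - m) := div_nonneg (by linarith) hMm.le
    have hab : (M - t)/(M - m) + (t - m)/(M - m) = 1 := by field_simp; ring
    have ht : ((M - t)/(M - m)) • m + ((t - m)/(M - m)) • M = t := by
      simp only [smul_eq_mul]
      field_simp
      ring
    have h2 := hconv.2 (Set.left_mem_Icc.2 hmM.le) (Set.right_mem_Icc.2 hmM.le) ha hb hab
    rw [ht] at h2
    refine h2.trans_eq ?_
    simp only [smul_eq_mul, hL, hc, hd]
    field_simp
    ring
  -- β bounds
  have hβge : ∀ t ∈ Set.Icc m M, L t - α * f t ≤ β := by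
    intro t ht
    rw [hβ]
    refine le_csSup ?_ ⟨t, ht, rfl⟩
    refine (isCompact_Icc.image_of_continuousOn ?_).bddAbove
    exact (continuousOn_const.mul continuousOn_id).add continuousOn_const |>.sub
      (continuousOn_const.mul hcont)
  have hcA : ContinuousOn f (spectrum ℝ A) := hcont.mono hAspec
  have hcB : ContinuousOn f (spectrum ℝ B) := hcont.mono hBspec
  have step1 : cfc f A ≤ cfc L A :=
    cfc_mono (fun x hx => chord x (hAspec hx)) hcA (by fun_prop)
  have hLcfc : ∀ T : H →L[ℂ] H, IsSelfAdjoint T → cfc L T = c • T + d • 1 := by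
    intro T hT
    rw [hL]
    rw [cfc_add (a := T) (fun t => c * t) (fun _ => d) (by fun_prop) (by fun_prop)]
    rw [show (fun t : ℝ => c * t) = (fun t : ℝ => c * id t) from rfl,
      cfc_const_mul c id T (by fun_prop), cfc_id ℝ T, cfc_const d T]
    simp [Algebra.algebraMap_eq_smul_one]
  have hc_nonpos : c ≤ 0 := by
    have := hanti (Set.left_mem_Icc.2 hmM.le) (Set.right_mem_Icc.2 hmM.le) hmM.le
    rw [hc]
    apply div_nonpos_of_nonpos_of_nonneg <;> linarith
  have step2 : cfc L A ≤ cfc L B := by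
    rw [hLcfc A hAsa, hLcfc B hBsa]
    have h0 : 0 ≤ (-c) • (A - B) :=
      smul_mono_aux _ (sub_nonneg.2 hBA) _ (neg_nonneg.2 hc_nonpos)
    have : c • A ≤ c • B := by
      rw [← sub_nonneg]
      have : c • B - c • A = (-c) • (A - B) := by
        rw [neg_smul, smul_sub]; abel
      rw [this]
      exact h0
    exact add_le_add this le_rfl
  have step3 : cfc L B ≤ cfc (fun t => α * f t + β) B := by
    refine cfc_mono (fun x hx => ?_) (by fun_prop) ?_
    · have := hβge x (hBspec hx)
      simp only [hL] at this ⊢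
      linarith
    · exact (continuousOn_const.mul hcB).add continuousOn_const
  have step4 : cfc (fun t => α * f t + β) B = α • cfc f B + β • 1 := by
    rw [cfc_add (a := B) (fun t => α * f t) (fun _ => β)
        (continuousOn_const.mul hcB) (by fun_prop),
      cfc_const_mul α f B hcB, cfc_const β B]
    simp [Algebra.algebraMap_eq_smul_one]
  calc cfc f A ≤ cfc L A := step1
    _ ≤ cfc L B := step2
    _ ≤ cfc (fun t => α * f t + β) B := step3
    _ = α • cfc f B + β • 1 := step4
end
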